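/- arXiv:1408.1088 — 8 statements merged into one kernel-verified Lean document; each statement's English description precedes it below -/
import Mathlib

section
/- Let G be a finite group with N = |G| and let N_k denote the number of elements of G of order k. The total number of 3-term arithmetic progressions in G (i.e., distinct three-element sets of the form {a, b·a, b²·a} with a, b ∈ G) equals N·N_3/6 + Σ_{k=4}^{N} N·N_k/2. -/
open Finset

/-- A 3-term arithmetic progression in a group `G`: a set of three distinct
elements of the form `{a, b*a, b^2*a}` with `a b : G`. -/
def IsThreeAP {G : Type*} [Group G] [DecidableEq G] (s : Finset G) : Prop :=
  s.card = 3 ∧ ∃ a b : G, s = {a, b * a, b ^ 2 * a}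

/-- The total number of 3-term arithmetic progressions in `G`. -/
noncomputable def threeAPCount (G : Type*) [Group G] [Fintype G] [DecidableEq G] : ℕ :=
  Set.ncard {s : Finset G | IsThreeAP s}

/-- `N_k`: the number of elements of `G` of order `k`. -/
noncomputable def orderCount (G : Type*) [Group G] [Fintype G] (k : ℕ) : ℕ :=
  (Finset.univ.filter fun g : G => orderOf g = k).card

/-!
Every 3-AP is `apSet (a, b) = {a, b * a, b ^ 2 * a}` for some pair with `3 ≤ orderOf b`, so the
number of 3-APs is the sum over such pairs of the reciprocal size of the fiber of `apSet`.
If `orderOf b ≥ 4`, the only other pair giving the same progression is the reversal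
`(b ^ 2 * a, b⁻¹)`. If `orderOf b = 3`, the progression is the coset `⟨b⟩ * a`, and it is produced
by any of its three points together with `b` or `b ^ 2`: six pairs.
-/

theorem Finset.card_image_eq_sum_inv_card_fiber {ι κ K : Type*} [DecidableEq κ]
    [DivisionSemiring K] [CharZero K] (s : Finset ι) (f : ι → κ) :
    (#(s.image f) : K) = ∑ i ∈ s, (#{j ∈ s | f j = f i} : K)⁻¹ := by
  rw [card_eq_sum_ones, Nat.cast_sum, Nat.cast_one]
  refine sum_image' _ fun i hi => ?_
  rw [sum_congr rfl fun j hj => by rw [(mem_filter.mp hj).2], sum_const, nsmul_eq_mul,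
    mul_inv_cancel₀]
  exact Nat.cast_ne_zero.mpr (card_ne_zero_of_mem (mem_filter.mpr ⟨hi, rfl⟩))

section Group

variable {G : Type*} [Group G]

theorem IsOfFinOrder.three_le_orderOf_iff {b : G} (hb : IsOfFinOrder b) :
    3 ≤ orderOf b ↔ b ≠ 1 ∧ b ^ 2 ≠ 1 := by
  refine ⟨fun h => ⟨?_, pow_ne_one_of_lt_orderOf two_ne_zero h⟩, fun ⟨h1, h2⟩ => ?_⟩
  · simpa using pow_ne_one_of_lt_orderOf one_ne_zero (by omega : 1 < orderOf b)
  · by_contra! h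
    have hpos := hb.orderOf_pos
    interval_cases hn : orderOf b
    · exact h1 (orderOf_eq_one_iff.mp hn)
    · exact h2 (hn ▸ pow_orderOf_eq_one b)

theorem card_filter_le_orderOf [Fintype G] (m : ℕ) :
    #{g : G | m ≤ orderOf g} = ∑ k ∈ Icc m (Fintype.card G), orderCount G k := by
  rw [card_eq_sum_card_fiberwise fun g hg =>
    mem_Icc.mpr ⟨(mem_filter.mp hg).2, orderOf_le_card_univ⟩]
  refine sum_congr rfl fun k hk => ?_
  rw [orderCount, filter_filter]
  exact congrArg card <| filter_congr fun g _ => ⟨And.right, fun h => ⟨h ▸ (mem_Icc.mp hk).1, h⟩⟩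

variable (G) in
noncomputable def apPairs [Fintype G] : Finset (G × G) := univ ×ˢ ({b | 3 ≤ orderOf b} : Finset G)

@[simp]
theorem mem_apPairs [Fintype G] {p : G × G} : p ∈ apPairs G ↔ 3 ≤ orderOf p.2 := by
  simp [apPairs]

variable [DecidableEq G]

def apSet (p : G × G) : Finset G := {p.1, p.2 * p.1, p.2 ^ 2 * p.1}

theorem card_apSet_eq_three_iff {a b : G} : #(apSet (a, b)) = 3 ↔ b ≠ 1 ∧ b ^ 2 ≠ 1 := by
  have h1 : a = b * a ↔ b = 1 := by rw [eq_comm, mul_eq_right]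
  have h2 : a = b ^ 2 * a ↔ b ^ 2 = 1 := by rw [eq_comm, mul_eq_right]
  have h3 : b * a = b ^ 2 * a ↔ b = 1 := by rw [mul_left_inj, pow_two, left_eq_mul]
  simp only [apSet, card_insert_eq_ite, mem_insert, mem_singleton, card_singleton, h1, h2, h3]
  split_ifs <;> simp_all

theorem apSet_eq_apSet_iff {a b x c : G} (hab : #(apSet (a, b)) = 3) :
    apSet (x, c) = apSet (a, b) ↔
      (c ≠ 1 ∧ c ^ 2 ≠ 1) ∧ x ∈ apSet (a, b) ∧ c * x ∈ apSet (a, b) ∧ c ^ 2 * x ∈ apSet (a, b) := by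
  have hsub : apSet (x, c) ⊆ apSet (a, b) ↔
      x ∈ apSet (a, b) ∧ c * x ∈ apSet (a, b) ∧ c ^ 2 * x ∈ apSet (a, b) := by
    simp only [apSet.eq_def (x, c), insert_subset_iff, singleton_subset_iff]
  rw [← card_apSet_eq_three_iff (a := x), ← hsub]
  refine ⟨fun h => ⟨h ▸ hab, h.subset⟩, fun ⟨hxc, hsub⟩ => eq_of_subset_of_card_le hsub ?_⟩
  rw [hab, hxc]

theorem apSet_eq_apSet_iff_of_pow_three_ne_one {a b x c : G} (hb1 : b ≠ 1) (hb2 : b ^ 2 ≠ 1)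
    (hb3 : b ^ 3 ≠ 1) :
    apSet (x, c) = apSet (a, b) ↔ (x, c) = (a, b) ∨ (x, c) = (b ^ 2 * a, b⁻¹) := by
  refine ⟨fun h => ?_, ?_⟩
  · obtain ⟨⟨hc1, hc2⟩, hx, hcx, hccx⟩ :=
      (apSet_eq_apSet_iff (card_apSet_eq_three_iff.mpr ⟨hb1, hb2⟩)).mp h
    simp only [apSet, mem_insert, mem_singleton, ← mul_inv_eq_one (a := c ^ 2 * x)] at hx hcx hccx
    -- Each placement of `x` and `c * x` in the progression makes `c` a power of `b`; outside
    -- the two wanted cases, the place of `c ^ 2 * x` contradicts `c ≠ 1`, `c ^ 2 ≠ 1` or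
    -- `b ^ 3 ≠ 1`.
    rcases hx with rfl | rfl | rfl <;> rcases hcx with hcx | hcx | hcx <;>
      obtain rfl := eq_mul_inv_of_mul_eq hcx <;> clear hcx <;> group at * <;> simp_all
  · rintro (h | h) <;> simp only [Prod.ext_iff] at h <;> rw [h.1, h.2]
    ext y
    simp only [apSet, mem_insert, mem_singleton]
    group
    tauto

theorem mem_zpowers_iff_of_orderOf_eq_three {b c : G} (hb : orderOf b = 3) :
    c ∈ Subgroup.zpowers b ↔ c = 1 ∨ c = b ∨ c = b ^ 2 := by
  rw [(orderOf_pos_iff.mp (hb ▸ three_pos)).mem_zpowers_iff_mem_range_orderOf, hb]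
  simp only [range_add_one, range_zero, image_insert, image_empty, mem_insert, notMem_empty,
    pow_zero, pow_one]
  tauto

theorem mem_apSet_iff_of_orderOf_eq_three {a b y : G} (hb : orderOf b = 3) :
    y ∈ apSet (a, b) ↔ y * a⁻¹ ∈ Subgroup.zpowers b := by
  simp [apSet, mem_zpowers_iff_of_orderOf_eq_three hb, mul_inv_eq_iff_eq_mul]

theorem apSet_eq_apSet_iff_of_orderOf_eq_three {a b x c : G} (hb : orderOf b = 3) :
    apSet (x, c) = apSet (a, b) ↔ x ∈ apSet (a, b) ∧ (c = b ∨ c = b ^ 2) := by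
  obtain ⟨hb1, hb2⟩ := (orderOf_pos_iff.mp (hb ▸ three_pos)).three_le_orderOf_iff.mp hb.ge
  have hb4 : (b ^ 2) ^ 2 = b := by
    rw [← pow_mul, show 2 * 2 = 3 + 1 from rfl, pow_succ, ← hb, pow_orderOf_eq_one, one_mul]
  set H := Subgroup.zpowers b
  have hcoset : ∀ {d y : G}, y * a⁻¹ ∈ H → (d * y * a⁻¹ ∈ H ↔ d ∈ H) := fun hy => by
    rw [mul_assoc]; exact H.mul_mem_cancel_right hy
  rw [apSet_eq_apSet_iff (card_apSet_eq_three_iff.mpr ⟨hb1, hb2⟩)]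
  simp only [mem_apSet_iff_of_orderOf_eq_three hb]
  constructor
  · rintro ⟨⟨hc1, -⟩, hx, hc, -⟩
    rw [hcoset hx, mem_zpowers_iff_of_orderOf_eq_three hb] at hc
    exact ⟨hx, hc.resolve_left hc1⟩
  · rintro ⟨hx, hc⟩
    have hcH : c ∈ H := (mem_zpowers_iff_of_orderOf_eq_three hb).mpr (Or.inr hc)
    refine ⟨?_, hx, (hcoset hx).mpr hcH, (hcoset hx).mpr (H.pow_mem hcH 2)⟩
    rcases hc with rfl | rfl
    · exact ⟨hb1, hb2⟩
    · exact ⟨hb2, hb4.symm ▸ hb1⟩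

variable [Fintype G]

theorem card_apSet_eq_three_iff_orderOf {a b : G} : #(apSet (a, b)) = 3 ↔ 3 ≤ orderOf b := by
  rw [card_apSet_eq_three_iff, (isOfFinOrder_of_finite b).three_le_orderOf_iff]

theorem card_apSet_fiber {a b : G} (hb : 3 ≤ orderOf b) :
    #{q ∈ apPairs G | apSet q = apSet (a, b)} = if orderOf b = 3 then 6 else 2 := by
  have hfiber : {q ∈ apPairs G | apSet q = apSet (a, b)} =
      ({q | apSet q = apSet (a, b)} : Finset (G × G)) := by
    ext ⟨x, c⟩
    simp only [mem_filter, mem_apPairs, mem_univ, true_and]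
    refine ⟨And.right, fun h => ⟨?_, h⟩⟩
    rwa [← card_apSet_eq_three_iff_orderOf (a := x), h, card_apSet_eq_three_iff_orderOf]
  obtain ⟨hb1, hb2⟩ := (isOfFinOrder_of_finite b).three_le_orderOf_iff.mp hb
  rw [hfiber]
  split_ifs with hord
  · have hbb : b ≠ b ^ 2 := by rwa [pow_two, ne_eq, left_eq_mul]
    have hreps : ({q | apSet q = apSet (a, b)} : Finset (G × G)) = apSet (a, b) ×ˢ {b, b ^ 2} := by
      ext ⟨x, c⟩
      simp [apSet_eq_apSet_iff_of_orderOf_eq_three hord]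
    rw [hreps, card_product, card_apSet_eq_three_iff.mpr ⟨hb1, hb2⟩, card_pair hbb]
  · have hb3 : b ^ 3 ≠ 1 := pow_ne_one_of_lt_orderOf three_ne_zero (by omega)
    have hbb : (a, b) ≠ (b ^ 2 * a, b⁻¹) := fun h =>
      hb2 (by rw [pow_two, mul_eq_one_iff_eq_inv]; exact congrArg Prod.snd h)
    have hreps : ({q | apSet q = apSet (a, b)} : Finset (G × G)) = {(a, b), (b ^ 2 * a, b⁻¹)} := by
      ext q
      simp [apSet_eq_apSet_iff_of_pow_three_ne_one hb1 hb2 hb3]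
    rw [hreps, card_pair hbb]

theorem threeAPCount_eq_card_image : threeAPCount G = #((apPairs G).image apSet) := by
  rw [threeAPCount, ← Set.ncard_coe_finset]
  congr 1
  ext s
  simp only [IsThreeAP, Set.mem_ofPred_eq, coe_image, Set.mem_image, mem_coe, mem_apPairs,
    Prod.exists]
  constructor
  · rintro ⟨hs, a, b, rfl⟩
    exact ⟨a, b, card_apSet_eq_three_iff_orderOf.mp hs, rfl⟩
  · rintro ⟨a, b, hb, rfl⟩
    exact ⟨card_apSet_eq_three_iff_orderOf.mpr hb, a, b, rfl⟩

end Group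

theorem threeAP_total_count (G : Type*) [Group G] [Fintype G] [DecidableEq G] :
    (threeAPCount G : ℝ) =
      (Fintype.card G : ℝ) * (orderCount G 3) / 6 +
        ∑ k ∈ Finset.Icc 4 (Fintype.card G),
          (Fintype.card G : ℝ) * (orderCount G k) / 2 := by
  have hweight : ∀ p ∈ apPairs G, (#{q ∈ apPairs G | apSet q = apSet p} : ℝ)⁻¹ =
      if orderOf p.2 = 3 then 6⁻¹ else 2⁻¹ := fun ⟨a, b⟩ hp => by
    rw [card_apSet_fiber (mem_apPairs.mp hp)]
    split_ifs <;> norm_num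
  have hcard_three : #{b : G | 3 ≤ orderOf b ∧ orderOf b = 3} = orderCount G 3 :=
    congrArg card <| filter_congr fun b _ => ⟨And.right, fun h => ⟨h.ge, h⟩⟩
  have hcard_ge_four : #{b : G | 3 ≤ orderOf b ∧ ¬orderOf b = 3} =
      ∑ k ∈ Icc 4 (Fintype.card G), orderCount G k := by
    rw [← card_filter_le_orderOf 4]
    exact congrArg card <| filter_congr fun b _ => by omega
  rw [threeAPCount_eq_card_image, card_image_eq_sum_inv_card_fiber, sum_congr rfl hweight,
    apPairs, sum_product]
  simp only [sum_ite, sum_const, card_univ, filter_filter, hcard_three, hcard_ge_four,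
    nsmul_eq_mul, Nat.cast_sum]
  rw [← sum_div, ← mul_sum]
  ring
end

section
/- Let G be a finite group, N = |G|, and let k ≥ 4 be an integer. The number of distinct three-element sets of the form {a, b·a, b²·a}, where a ∈ G and b ∈ G is an element of order k, equals N·N_k/2, where N_k is the number of elements of G of order k. -/
open Finset

section aux
variable {G : Type*} [Group G]

lemma powne' {k : ℕ} (hk : 4 ≤ k) {b : G} (hb : orderOf b = k)
    {n : ℕ} (hn : 0 < n) (hn4 : n < 4) : b ^ n ≠ 1 := by
  intro h
  have hd := orderOf_dvd_of_pow_eq_one h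
  rw [hb] at hd
  have := Nat.le_of_dvd hn hd
  omega

lemma gen' {k : ℕ} (hk : 4 ≤ k) {a b b' : G}
    (hb : orderOf b = k) (hb' : orderOf b' = k) {i j m : ℕ}
    (hi : i ≤ 2) (hj : j ≤ 2) (hm : m ≤ 2)
    (h2 : b' * (b ^ j * a) = b ^ i * a)
    (h3 : b' ^ 2 * (b ^ j * a) = b ^ m * a) :
    (j = 0 ∧ i = 1 ∧ m = 2 ∧ b' = b) ∨ (j = 2 ∧ i = 1 ∧ m = 0 ∧ b' = b⁻¹) := by
  have hb'v : b' = b ^ (i : ℤ) * b ^ (-(j : ℤ)) := by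
    have : b' = (b ^ i * a) * (b ^ j * a)⁻¹ := eq_mul_inv_of_mul_eq h2
    rw [this]; push_cast [zpow_natCast]; group
  have h3' : b' ^ 2 * b ^ j = b ^ m := mul_right_cancel (by rw [mul_assoc]; exact h3)
  have hbe : b ^ (2*(i:ℤ) - j - m) = 1 := by
    have he : (b ^ (i:ℤ) * b ^ (-(j:ℤ))) ^ 2 * b ^ j * (b ^ m)⁻¹ = b ^ (2*(i:ℤ) - j - m) := by
      group
    rw [← he, ← hb'v, h3']; group
  have hdvd : (k : ℤ) ∣ (2*(i:ℤ) - j - m) := by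
    rw [← hb]; exact orderOf_dvd_iff_zpow_eq_one.mpr hbe
  have hdvd' : k ∣ (2*(i:ℤ) - j - m).natAbs := Int.natAbs_dvd_natAbs.mpr (by simpa using hdvd)
  have hcase : (2*(i:ℤ) - j - m) = 0 ∨ ((2*(i:ℤ) - j - m).natAbs = 4 ∧ k = 4) := by
    rcases Nat.eq_zero_or_pos (2*(i:ℤ) - j - m).natAbs with h0 | hpos
    · left; omega
    · right; have := Nat.le_of_dvd hpos hdvd'; omega
  rcases hcase with h0 | ⟨h4, hk4⟩
  · have hij : i = j ∨ (i = 1 ∧ j = 0 ∧ m = 2) ∨ (i = 1 ∧ j = 2 ∧ m = 0) := by omega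
    rcases hij with hij | ⟨hi1, hj0, hm2⟩ | ⟨hi1, hj2, hm0⟩
    · exfalso
      have : b' = 1 := by rw [hb'v, hij]; group
      rw [this, orderOf_one] at hb'; omega
    · left
      refine ⟨hj0, hi1, hm2, ?_⟩
      rw [hb'v, hi1, hj0]; group
    · right
      refine ⟨hj2, hi1, hm0, ?_⟩
      rw [hb'v, hi1, hj2]; group
  · exfalso
    have hcases : (i = 2 ∧ j = 0 ∧ m = 0) ∨ (i = 0 ∧ j = 2 ∧ m = 2) := by omega
    have hb'2 : b' ^ 2 = 1 := by
      rcases hcases with ⟨hi2, hj0, hm0⟩ | ⟨hi0, hj2, hm2⟩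
      · have h5 : b' ^ 2 = b ^ (4:ℤ) := by rw [hb'v, hi2, hj0]; push_cast; group
        rw [h5]
        have h6 : b ^ (2*(i:ℤ) - j - m) = b ^ (4:ℤ) := by rw [hi2, hj0, hm0]; norm_num
        rw [← h6]; exact hbe
      · have h5 : b' ^ 2 = b ^ (-4:ℤ) := by rw [hb'v, hi0, hj2]; push_cast; group
        rw [h5]
        have h6 : b ^ (2*(i:ℤ) - j - m) = b ^ (-4:ℤ) := by rw [hi0, hj2, hm2]; norm_num
        rw [← h6]; exact hbe
    have h7 := orderOf_dvd_of_pow_eq_one hb'2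
    rw [hb'] at h7
    have := Nat.le_of_dvd (by norm_num) h7
    omega

lemma key' [DecidableEq G] {k : ℕ} (hk : 4 ≤ k)
    {a b a' b' : G} (hb : orderOf b = k) (hb' : orderOf b' = k)
    (hs : ({a', b' * a', b' ^ 2 * a'} : Finset G) = {a, b * a, b ^ 2 * a}) :
    (a' = a ∧ b' = b) ∨ (a' = b ^ 2 * a ∧ b' = b⁻¹) := by
  have h1 : a' = a ∨ a' = b * a ∨ a' = b ^ 2 * a := by
    have : a' ∈ ({a, b * a, b ^ 2 * a} : Finset G) := hs ▸ (by simp)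
    simpa using this
  have h2 : b' * a' = a ∨ b' * a' = b * a ∨ b' * a' = b ^ 2 * a := by
    have : b' * a' ∈ ({a, b * a, b ^ 2 * a} : Finset G) := hs ▸ (by simp)
    simpa using this
  have h3 : b' ^ 2 * a' = a ∨ b' ^ 2 * a' = b * a ∨ b' ^ 2 * a' = b ^ 2 * a := by
    have : b' ^ 2 * a' ∈ ({a, b * a, b ^ 2 * a} : Finset G) := hs ▸ (by simp)
    simpa using this
  obtain ⟨j, hj2, hja⟩ : ∃ j, j ≤ 2 ∧ a' = b ^ j * a := by
    rcases h1 with h1 | h1 | h1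
    · exact ⟨0, by norm_num, by simpa using h1⟩
    · exact ⟨1, by norm_num, by simpa using h1⟩
    · exact ⟨2, by norm_num, h1⟩
  obtain ⟨i, hi2, hia⟩ : ∃ i, i ≤ 2 ∧ b' * a' = b ^ i * a := by
    rcases h2 with h2 | h2 | h2
    · exact ⟨0, by norm_num, by simpa using h2⟩
    · exact ⟨1, by norm_num, by simpa using h2⟩
    · exact ⟨2, by norm_num, h2⟩
  obtain ⟨m, hm2, hma⟩ : ∃ m, m ≤ 2 ∧ b' ^ 2 * a' = b ^ m * a := by
    rcases h3 with h3 | h3 | h3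
    · exact ⟨0, by norm_num, by simpa using h3⟩
    · exact ⟨1, by norm_num, by simpa using h3⟩
    · exact ⟨2, by norm_num, h3⟩
  rw [hja] at hia hma
  rcases gen' hk hb hb' hi2 hj2 hm2 hia hma with ⟨hj0, _, _, hbb⟩ | ⟨hj2', _, _, hbb⟩
  · left; exact ⟨by rw [hja, hj0]; simp, hbb⟩
  · right; exact ⟨by rw [hja, hj2'], hbb⟩

lemma card3' [DecidableEq G] {k : ℕ} (hk : 4 ≤ k) {b : G}
    (hb : orderOf b = k) (a : G) : ({a, b * a, b ^ 2 * a} : Finset G).card = 3 := by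
  have h1 : b ≠ 1 := by simpa using powne' hk hb (n := 1) one_pos (by norm_num)
  have h2 : b ^ 2 ≠ 1 := powne' hk hb (n := 2) two_pos (by norm_num)
  have d1 : a ≠ b * a := fun h => h1 (by
    have : (1:G) * a = b * a := by simpa using h
    exact (mul_right_cancel this).symm)
  have d2 : a ≠ b ^ 2 * a := fun h => h2 (by
    have : (1:G) * a = b ^ 2 * a := by simpa using h
    exact (mul_right_cancel this).symm)
  have d3 : b * a ≠ b ^ 2 * a := fun h => h2 (by
    have hb' : b = b ^ 2 := mul_right_cancel h
    have : b * b = 1 * b := by rw [← pow_two, ← hb', one_mul]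
    have hb1 : b = 1 := mul_right_cancel this
    rw [hb1]; simp)
  rw [card_insert_of_notMem (by simp [d1, d2]), card_insert_of_notMem (by simp [d3])]
  simp

end aux

theorem threeAP_count_order_k (G : Type*) [Group G] [Fintype G] [DecidableEq G]
    (k : ℕ) (hk : 4 ≤ k) :
    (Set.ncard {s : Finset G | s.card = 3 ∧
        ∃ a b : G, orderOf b = k ∧ s = {a, b * a, b ^ 2 * a}} : ℝ) =
      (Fintype.card G : ℝ) * (orderCount G k) / 2 := by
  classical
  set m : G × G → Finset G := fun p => {p.1, p.2 * p.1, p.2 ^ 2 * p.1} with hm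
  set T : Finset (G × G) := univ.filter fun p => orderOf p.2 = k with hT
  set I : Finset (Finset G) := T.image m with hI
  have hset : {s : Finset G | s.card = 3 ∧
      ∃ a b : G, orderOf b = k ∧ s = {a, b * a, b ^ 2 * a}} = ↑I := by
    ext s
    simp only [Set.mem_setOf_eq, hI, coe_image, Set.mem_image, mem_coe, hT, mem_filter,
      mem_univ, true_and, hm]
    constructor
    · rintro ⟨-, a, b, hb, rfl⟩
      exact ⟨(a, b), hb, rfl⟩
    · rintro ⟨⟨a, b⟩, hb, rfl⟩
      exact ⟨card3' hk hb a, a, b, hb, rfl⟩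
  rw [hset, Set.ncard_coe_finset]
  have hTcard : T.card = Fintype.card G * orderCount G k := by
    have : T = univ ×ˢ (univ.filter fun b : G => orderOf b = k) := by
      ext p; simp [hT, Finset.mem_product]
    rw [this, card_product, card_univ, orderCount]
  have hfiber : ∀ s ∈ I, (T.filter fun p => m p = s).card = 2 := by
    intro s hs
    obtain ⟨⟨a, b⟩, hbT, hms⟩ := Finset.mem_image.mp hs
    have hb : orderOf b = k := by simpa [hT] using hbT
    have hbi : orderOf b⁻¹ = k := by rwa [orderOf_inv]
    have hbne : b ≠ b⁻¹ := by
      intro h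
      have : b ^ 2 = 1 := by rw [pow_two]; nth_rewrite 2 [h]; simp
      exact powne' hk hb two_pos (by norm_num) this
    have hfe : (T.filter fun p => m p = s) = {(a, b), (b ^ 2 * a, b⁻¹)} := by
      ext ⟨a', b'⟩
      simp only [mem_filter, hT, mem_univ, true_and, mem_insert, mem_singleton,
        Prod.mk.injEq]
      constructor
      · rintro ⟨hb', hmp⟩
        have hseq : ({a', b' * a', b' ^ 2 * a'} : Finset G) = {a, b * a, b ^ 2 * a} := by
          rw [← hms] at hmp; simpa [hm] using hmp
        rcases key' hk hb hb' hseq with ⟨h1, h2⟩ | ⟨h1, h2⟩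
        · exact Or.inl ⟨h1, h2⟩
        · exact Or.inr ⟨h1, h2⟩
      · rintro (⟨rfl, rfl⟩ | ⟨rfl, rfl⟩)
        · exact ⟨hb, hms⟩
        · refine ⟨hbi, ?_⟩
          rw [← hms]
          simp only [hm]
          have e1 : b⁻¹ * (b ^ 2 * a) = b * a := by group
          have e2 : (b⁻¹) ^ 2 * (b ^ 2 * a) = a := by group
          rw [e1, e2]
          ext x; simp; tauto
    rw [hfe, card_insert_of_notMem (by simp [hbne]), card_singleton]
  have hcount : T.card = 2 * I.card := by
    rw [Finset.card_eq_sum_card_image m T, ← hI, Finset.sum_congr rfl hfiber,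
      Finset.sum_const, smul_eq_mul, mul_comm]
  have hnat : (Fintype.card G) * (orderCount G k) = 2 * I.card := by rw [← hTcard, hcount]
  have hr : ((Fintype.card G : ℝ)) * (orderCount G k) = 2 * I.card := by exact_mod_cast hnat
  rw [eq_div_iff (by norm_num : (2:ℝ) ≠ 0)]
  rw [hr]; ring
end

section
/- Let G be a finite group and N = |G|. The number of distinct three-element sets of the form {a, b·a, b²·a}, where a ∈ G and b ∈ G is an element of order 3, equals N·N_3/6, where N_3 is the number of elements of G of order 3. -/
set_option linter.unusedSectionVars false

open Finset

namespace ThreeAPAux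

variable {G : Type*} [Group G] [Fintype G] [DecidableEq G]

lemma ord3_pow3 {b : G} (hb : orderOf b = 3) : b ^ 3 = 1 := by
  rw [← hb]; exact pow_orderOf_eq_one b

lemma ord3_ne_one {b : G} (hb : orderOf b = 3) : b ≠ 1 := by
  intro h; rw [h, orderOf_one] at hb; omega

lemma ord3_sq_ne_one {b : G} (hb : orderOf b = 3) : b ^ 2 ≠ 1 := by
  intro h
  have := orderOf_dvd_of_pow_eq_one h
  rw [hb] at this; omega

lemma ord3_sq_eq_inv {b : G} (hb : orderOf b = 3) : b ^ 2 = b⁻¹ :=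
  eq_inv_of_mul_eq_one_left (by rw [← pow_succ, ord3_pow3 hb])

lemma ord3_sq_ord {b : G} (hb : orderOf b = 3) : orderOf (b ^ 2) = 3 := by
  rw [ord3_sq_eq_inv hb, orderOf_inv, hb]

lemma ord3_ne_sq {b : G} (hb : orderOf b = 3) : b ≠ b ^ 2 := by
  intro h
  apply ord3_ne_one hb
  have : b * 1 = b * b := by rw [mul_one, ← sq, ← h]
  exact (mul_left_cancel this).symm

lemma ord3_card3 {b : G} (hb : orderOf b = 3) (a : G) :
    ({a, b * a, b ^ 2 * a} : Finset G).card = 3 := by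
  have d1 : a ≠ b * a := fun h =>
    ord3_ne_one hb (mul_right_cancel (b := a) (by rw [one_mul, ← h])).symm
  have d2 : a ≠ b ^ 2 * a := fun h =>
    ord3_sq_ne_one hb (mul_right_cancel (b := a) (by rw [one_mul, ← h])).symm
  have d3 : b * a ≠ b ^ 2 * a := fun h => ord3_ne_sq hb (mul_right_cancel h)
  rw [card_insert_of_notMem (by simp [d1, d2]), card_insert_of_notMem (by simp [d3]),
    card_singleton]

section
variable {b : G}

lemma p1 (hb : orderOf b = 3) : b * b ^ 2 = 1 := by rw [← pow_succ', ord3_pow3 hb]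
lemma p2 (hb : orderOf b = 3) : b ^ 2 * b = 1 := by rw [← pow_succ, ord3_pow3 hb]
lemma p3 (hb : orderOf b = 3) : b ^ 2 * b ^ 2 = b := by
  rw [← pow_add, show 2 + 2 = 4 from rfl, pow_succ, ord3_pow3 hb, one_mul]
lemma p4 (hb : orderOf b = 3) : (b ^ 2) ^ 2 = b := by rw [sq (b ^ 2), p3 hb]

lemma fiber_eq (hb : orderOf b = 3) (a : G) :
    ((univ ×ˢ univ.filter fun g : G => orderOf g = 3).filter
      (fun p : G × G => ({p.1, p.2 * p.1, p.2 ^ 2 * p.1} : Finset G) = {a, b * a, b ^ 2 * a}))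
    = (({a, b * a, b ^ 2 * a} : Finset G) ×ˢ ({b, b ^ 2} : Finset G)) := by
  ext ⟨x, y⟩
  simp only [mem_filter, mem_product, mem_univ, true_and, mem_filter, mem_insert, mem_singleton]
  constructor
  · rintro ⟨hy, hset⟩
    have hx : x = a ∨ x = b * a ∨ x = b ^ 2 * a := by
      have := hset ▸ (mem_insert_self x {y * x, y ^ 2 * x})
      simpa using this
    have hyx : y * x = a ∨ y * x = b * a ∨ y * x = b ^ 2 * a := by
      have : y * x ∈ ({x, y * x, y ^ 2 * x} : Finset G) := by simp
      rw [hset] at this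
      simpa using this
    refine ⟨hx, ?_⟩
    rcases hx with rfl | rfl | rfl
    · rcases hyx with h | h | h
      · exact absurd (mul_right_cancel (b := x) (h.trans (one_mul x).symm)) (ord3_ne_one hy)
      · exact Or.inl (mul_right_cancel h)
      · exact Or.inr (mul_right_cancel h)
    · rw [← mul_assoc] at hyx
      rcases hyx with h | h | h
      · have h1 : y * b = 1 := mul_right_cancel (b := a) (by rw [h, one_mul])
        exact Or.inr ((eq_inv_of_mul_eq_one_left h1).trans (ord3_sq_eq_inv hb).symm)
      · have h1 : y * b = b := mul_right_cancel h
        exact absurd (mul_right_cancel (b := b) (h1.trans (one_mul b).symm)) (ord3_ne_one hy)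
      · have h1 : y * b = b ^ 2 := mul_right_cancel h
        rw [sq] at h1
        exact Or.inl (mul_right_cancel h1)
    · rw [← mul_assoc] at hyx
      rcases hyx with h | h | h
      · have h1 : y * b ^ 2 = 1 := mul_right_cancel (b := a) (by rw [h, one_mul])
        have h2 : b * b ^ 2 = 1 := p1 hb
        exact Or.inl (mul_right_cancel (b := b ^ 2) (h1.trans h2.symm))
      · have h1 : y * b ^ 2 = b := mul_right_cancel h
        exact Or.inr (mul_right_cancel (b := b ^ 2) (h1.trans (p3 hb).symm))
      · have h1 : y * b ^ 2 = b ^ 2 := mul_right_cancel h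
        exact absurd (mul_right_cancel (b := b ^ 2) (h1.trans (one_mul _).symm)) (ord3_ne_one hy)
  · rintro ⟨hx, hy⟩
    have hyo : orderOf y = 3 := by
      rcases hy with rfl | rfl
      · exact hb
      · exact ord3_sq_ord hb
    refine ⟨hyo, ?_⟩
    rcases hy with rfl | rfl <;> rcases hx with rfl | rfl | rfl
    · rfl
    · rw [show y * (y * a) = y ^ 2 * a from by rw [← mul_assoc, ← sq],
        show y ^ 2 * (y * a) = a from by rw [← mul_assoc, p2 hb, one_mul]]
      ext z; simp only [mem_insert, mem_singleton]; tauto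
    · rw [show y * (y ^ 2 * a) = a from by rw [← mul_assoc, p1 hb, one_mul],
        show y ^ 2 * (y ^ 2 * a) = y * a from by rw [← mul_assoc, p3 hb]]
      ext z; simp only [mem_insert, mem_singleton]; tauto
    · rw [p4 hb]
      ext z; simp only [mem_insert, mem_singleton]; tauto
    · rw [show b ^ 2 * (b * a) = a from by rw [← mul_assoc, p2 hb, one_mul],
        show (b ^ 2) ^ 2 * (b * a) = b ^ 2 * a from by rw [p4 hb, ← mul_assoc, ← sq]]
      ext z; simp only [mem_insert, mem_singleton]; tauto
    · rw [show b ^ 2 * (b ^ 2 * a) = b * a from by rw [← mul_assoc, p3 hb],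
        show (b ^ 2) ^ 2 * (b ^ 2 * a) = a from by rw [p4 hb, ← mul_assoc, p1 hb, one_mul]]
      ext z; simp only [mem_insert, mem_singleton]; tauto

end

theorem threeAP_count_order_three' (G : Type*) [Group G] [Fintype G] [DecidableEq G] :
    (Set.ncard {s : Finset G | s.card = 3 ∧
        ∃ a b : G, orderOf b = 3 ∧ s = {a, b * a, b ^ 2 * a}} : ℝ) =
      (Fintype.card G : ℝ) * ((Finset.univ.filter fun g : G => orderOf g = 3).card) / 6 := by
  classical
  let P : Finset (G × G) := univ ×ˢ univ.filter fun g : G => orderOf g = 3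
  let f : G × G → Finset G := fun p => ({p.1, p.2 * p.1, p.2 ^ 2 * p.1} : Finset G)
  have hmemP : ∀ p : G × G, p ∈ P ↔ orderOf p.2 = 3 := by
    intro p
    simp [P, mem_product]
  have hSet : {s : Finset G | s.card = 3 ∧
      ∃ a b : G, orderOf b = 3 ∧ s = {a, b * a, b ^ 2 * a}} = ↑(P.image f) := by
    ext s
    simp only [Set.mem_setOf_eq, coe_image, Set.mem_image, mem_coe]
    constructor
    · rintro ⟨-, a, b, hb, rfl⟩
      exact ⟨(a, b), (hmemP (a, b)).2 hb, rfl⟩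
    · rintro ⟨⟨a, b⟩, hmem, rfl⟩
      have hb : orderOf b = 3 := (hmemP (a, b)).1 hmem
      exact ⟨ord3_card3 hb a, a, b, hb, rfl⟩
  rw [hSet, Set.ncard_coe_finset]
  have hfib : ∀ s ∈ P.image f, (P.filter fun p => f p = s).card = 6 := by
    intro s hs
    obtain ⟨⟨a, b⟩, hmem, rfl⟩ := mem_image.1 hs
    have hb : orderOf b = 3 := (hmemP (a, b)).1 hmem
    have := fiber_eq hb a
    rw [show (P.filter fun p => f p = f (a, b)) =
        ((univ ×ˢ univ.filter fun g : G => orderOf g = 3).filter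
          (fun p : G × G => ({p.1, p.2 * p.1, p.2 ^ 2 * p.1} : Finset G)
            = {a, b * a, b ^ 2 * a})) from rfl, this, card_product, ord3_card3 hb a]
    rw [card_insert_of_notMem (by simpa using ord3_ne_sq hb), card_singleton]
  have hsum := card_eq_sum_card_fiberwise (fun x hx => mem_image_of_mem f hx :
    ∀ x ∈ P, f x ∈ P.image f)
  rw [Finset.sum_congr rfl hfib, sum_const, smul_eq_mul] at hsum
  have hPcard : P.card = Fintype.card G * (univ.filter fun g : G => orderOf g = 3).card := by
    rw [card_product, card_univ]
  rw [hPcard] at hsum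
  have : ((P.image f).card : ℝ) * 6 =
      (Fintype.card G : ℝ) * ((univ.filter fun g : G => orderOf g = 3).card) := by
    exact_mod_cast hsum.symm
  linarith

end ThreeAPAux

theorem threeAP_count_order_three (G : Type*) [Group G] [Fintype G] [DecidableEq G] :
    (Set.ncard {s : Finset G | s.card = 3 ∧
        ∃ a b : G, orderOf b = 3 ∧ s = {a, b * a, b ^ 2 * a}} : ℝ) =
      (Fintype.card G : ℝ) * (orderCount G 3) / 6 := by
  rw [orderCount]
  exact ThreeAPAux.threeAP_count_order_three' G
end

section
/- Let k ≥ 5 be an odd integer not divisible by 3, and let φ denote Euler's totient function. Then for every function x : {0, 1, …, k−1} → [−1, 1], one has Σ_{0 ≤ i < j ≤ k−1, gcd(j−i, k) = 1} x_i·x_j ≥ −k·(k − φ(k))/2. -/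
/-!
The sum over all pairs is at least `-k/2`, since `(∑ xᵢ)² ≥ 0` and `∑ xᵢ² ≤ k`, and dropping the
non-coprime pairs costs at most one per pair. There are exactly `k φ(k) / 2` coprime pairs: as
`gcd (k - d) k = gcd d k`, the differences `j - i` of the pairs `i < j` with fixed `j`, together
with `k` minus those with `j` replaced by `k - 1 - j`, run once through `1, …, k - 1`; so these
two rows contain `φ(k)` coprime pairs between them.
-/

open Finset

theorem sq_sum_range_eq_sum_sq_add_two_mul_sum_pairs (x : ℕ → ℝ) (n : ℕ) :
    (∑ i ∈ range n, x i) ^ 2 =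
      ∑ i ∈ range n, x i ^ 2 + 2 * ∑ j ∈ range n, ∑ i ∈ range j, x i * x j := by
  induction n with
  | zero => simp
  | succ n ih =>
    rw [sum_range_succ, sum_range_succ (x · ^ 2),
      sum_range_succ (fun j => ∑ i ∈ range j, x i * x j), ← sum_mul]
    linear_combination ih

theorem neg_half_le_sum_pairs {n : ℕ} {x : ℕ → ℝ} (hx : ∀ i < n, |x i| ≤ 1) :
    -(n : ℝ) / 2 ≤ ∑ j ∈ range n, ∑ i ∈ range j, x i * x j := by
  have hsq : ∑ i ∈ range n, x i ^ 2 ≤ n := by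
    simpa using sum_le_sum fun i hi => (sq_le_one_iff_abs_le_one (x i)).mpr (hx i (mem_range.mp hi))
  nlinarith [sq_sum_range_eq_sum_sq_add_two_mul_sum_pairs x n, sq_nonneg (∑ i ∈ range n, x i)]

theorem sum_pairs_sub_card_le_sum_pairs_filter {n : ℕ} {x : ℕ → ℝ} (hx : ∀ i < n, |x i| ≤ 1)
    (p : ℕ → ℕ → Prop) [DecidableRel p] :
    ∑ j ∈ range n, ∑ i ∈ range j, x i * x j - ∑ j ∈ range n, (#{i ∈ range j | ¬ p j i} : ℝ)
      ≤ ∑ j ∈ range n, ∑ i ∈ range j with p j i, x i * x j := by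
  rw [← sum_sub_distrib]
  refine sum_le_sum fun j hj => ?_
  have hprod_le_one : ∀ i ∈ range j, x i * x j ≤ 1 := fun i hi =>
    (le_abs_self _).trans <| by
      rw [abs_mul]
      exact mul_le_one₀ (hx i (by grind)) (abs_nonneg _) (hx j (mem_range.mp hj))
  have hexcluded : ∑ i ∈ range j with ¬ p j i, x i * x j ≤ #{i ∈ range j | ¬ p j i} := by
    simpa using sum_le_sum fun i hi => hprod_le_one i (mem_filter.mp hi).1
  rw [← sum_filter_add_sum_filter_not (range j) (p j)]
  linarith

theorem card_filter_coprime_sub (k j : ℕ) :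
    #{i ∈ range j | Nat.Coprime (j - i) k} = #{i ∈ range j | Nat.Coprime (i + 1) k} := by
  rw [card_filter, card_filter, ← sum_range_reflect]
  refine sum_congr rfl fun i hi => ?_
  rw [show j - (j - 1 - i) = i + 1 by grind]

theorem card_filter_coprime_sub_add_card_filter_coprime_sub {k j : ℕ} (hk : k ≠ 1) (hj : j < k) :
    #{i ∈ range j | Nat.Coprime (j - i) k} +
      #{i ∈ range (k - 1 - j) | Nat.Coprime (k - 1 - j - i) k} = Nat.totient k := by
  have hreflect : #{i ∈ range (k - 1 - j) | Nat.Coprime (k - 1 - j - i) k}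
      = #{i ∈ range (k - 1 - j) | Nat.Coprime (j + i + 1) k} := by
    refine congrArg card (filter_congr fun i hi => ?_)
    rw [show k - 1 - j - i = k - (j + i + 1) by grind, Nat.Coprime, Nat.Coprime,
      Nat.gcd_self_sub_left (by grind)]
  have htotient : Nat.totient k = ∑ i ∈ range (k - 1), if Nat.Coprime (i + 1) k then 1 else 0 := by
    obtain ⟨m, rfl⟩ : ∃ m, k = m + 1 := Nat.exists_eq_succ_of_ne_zero (by omega)
    rw [Nat.totient_eq_card_coprime, card_filter, sum_range_succ']
    simp [Nat.coprime_comm]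
    omega
  rw [hreflect, card_filter_coprime_sub, card_filter, card_filter, htotient,
    ← sum_range_add, show j + (k - 1 - j) = k - 1 by omega]

theorem two_mul_sum_card_filter_coprime_sub {k : ℕ} (hk : k ≠ 1) :
    2 * ∑ j ∈ range k, #{i ∈ range j | Nat.Coprime (j - i) k} = k * Nat.totient k := by
  calc 2 * ∑ j ∈ range k, #{i ∈ range j | Nat.Coprime (j - i) k}
      = ∑ j ∈ range k, (#{i ∈ range j | Nat.Coprime (j - i) k} +
          #{i ∈ range (k - 1 - j) | Nat.Coprime (k - 1 - j - i) k}) := by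
        rw [two_mul, sum_add_distrib,
          ← sum_range_reflect (fun j => #{i ∈ range j | Nat.Coprime (j - i) k})]
    _ = k * Nat.totient k := by
        rw [sum_congr rfl fun j hj =>
          card_filter_coprime_sub_add_card_filter_coprime_sub hk (mem_range.mp hj)]
        simp

theorem two_mul_sum_card_filter_not_coprime_sub_add {k : ℕ} (hk : k ≠ 1) :
    2 * ∑ j ∈ range k, #{i ∈ range j | ¬ Nat.Coprime (j - i) k} + k * Nat.totient k
      = k * (k - 1) := by
  rw [← two_mul_sum_card_filter_coprime_sub hk, ← mul_add, ← sum_add_distrib, mul_comm,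
    ← sum_range_id_mul_two]
  congr 1
  exact sum_congr rfl fun j _ => by
    simpa [add_comm] using card_filter_add_card_filter_not (s := range j) (p := fun i => Nat.Coprime (j - i) k)

theorem coprime_pair_sum_lower_bound_general (k : ℕ) (hk : 5 ≤ k)
    (x : ℕ → ℝ) (hx : ∀ i < k, x i ∈ Set.Icc (-1 : ℝ) 1) :
    -((k : ℝ) * ((k : ℝ) - Nat.totient k)) / 2 ≤
      ∑ j ∈ Finset.range k,
        ∑ i ∈ (Finset.range j).filter (fun i => Nat.gcd (j - i) k = 1),
          x i * x j := by
  have hx' : ∀ i < k, |x i| ≤ 1 := fun i hi => abs_le.mpr (hx i hi)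
  have hcount : ((2 * ∑ j ∈ range k, #{i ∈ range j | ¬ Nat.Coprime (j - i) k}
      + k * Nat.totient k : ℕ) : ℝ) = ((k * (k - 1) : ℕ) : ℝ) :=
    congrArg _ (two_mul_sum_card_filter_not_coprime_sub_add (by omega))
  push_cast [Nat.cast_sub (by omega : 1 ≤ k)] at hcount
  linarith [neg_half_le_sum_pairs hx',
    sum_pairs_sub_card_le_sum_pairs_filter hx' (fun j i => Nat.Coprime (j - i) k)]

theorem coprime_pair_sum_lower_bound (k : ℕ) (hk : 5 ≤ k) (hodd : Odd k)
    (h3 : ¬ 3 ∣ k) (x : ℕ → ℝ) (hx : ∀ i < k, x i ∈ Set.Icc (-1 : ℝ) 1) :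
    -((k : ℝ) * ((k : ℝ) - Nat.totient k)) / 2 ≤
      ∑ j ∈ Finset.range k,
        ∑ i ∈ (Finset.range j).filter (fun i => Nat.gcd (j - i) k = 1),
          x i * x j :=
  coprime_pair_sum_lower_bound_general k hk x hx
end

section
/- Let k be a positive integer divisible by 3. Then there exists a 2-coloring χ of ℤ_k (namely, color i with one color if i mod 3 ∈ {0, 1} and with the other color if i mod 3 = 2) such that for every i ∈ ℤ_k and every j with gcd(j, k) = 1, the three elements i, i+j, i+2j do not all receive the same color; that is, no 3-term arithmetic progression {i, i+j, i+2j} in ℤ_k with gcd(j, k) = 1 is monochromatic under χ. -/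
lemma zmod3_key : ∀ a d : ZMod 3, d ≠ 0 →
    ¬ (((a = 2) ↔ (a + d = 2)) ∧ ((a + d = 2) ↔ (a + d + d = 2))) := by decide

theorem three_dvd_cyclic_no_mono_coprime_AP (k : ℕ) (hk : 0 < k) (h3 : 3 ∣ k) :
    ∃ χ : ZMod k → ℤ, (∀ i, χ i = 1 ∨ χ i = -1) ∧
      ∀ i j : ZMod k, Nat.gcd (ZMod.val j) k = 1 →
        ¬ (χ i = χ (i + j) ∧ χ (i + j) = χ (i + j + j)) := by
  haveI : NeZero k := ⟨hk.ne'⟩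
  let f : ZMod k →+* ZMod 3 := ZMod.castHom h3 (ZMod 3)
  refine ⟨fun i => if f i = 2 then -1 else 1, fun i => by dsimp only; split <;> simp, ?_⟩
  intro i j hgcd h
  have hd : f j ≠ 0 := by
    intro h0
    have : ((j.val : ℕ) : ZMod 3) = 0 := by
      rw [ZMod.natCast_val]; simpa [f, ZMod.castHom_apply] using h0
    have h3d : (3 : ℕ) ∣ j.val := (ZMod.natCast_eq_zero_iff _ _).mp this
    have : (3 : ℕ) ∣ Nat.gcd j.val k := Nat.dvd_gcd h3d h3
    omega
  have h1 : ((f i = 2) ↔ (f i + f j = 2)) ∧ ((f i + f j = 2) ↔ (f i + f j + f j = 2)) := by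
    obtain ⟨ha, hb⟩ := h
    simp only [map_add] at *
    constructor
    · constructor <;> intro hx <;> by_contra hy <;> simp [hx, hy, hd] at ha
    · constructor <;> intro hx <;> by_contra hy <;> simp [hx, hy, hd] at hb
  exact zmod3_key (f i) (f j) hd h1
end

section
/- For every positive integer n, R(3, D_{2n}, 2) = 2·R(3, ℤ_n, 2), where D_{2n} is the dihedral group of order 2n and ℤ_n is the cyclic group of order n. That is, the minimal number of monochromatic 3-term arithmetic progressions over all 2-colorings of the dihedral group of order 2n equals twice the minimal number of monochromatic 3-term arithmetic progressions over all 2-colorings of the cyclic group of order n. -/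
open Finset

/-- The number of monochromatic 3-term arithmetic progressions of `G` under the
2-coloring `χ : G → {-1, 1}`. -/
noncomputable def monoAPCount (G : Type*) [Group G] [Fintype G] [DecidableEq G]
    (χ : G → ℤ) : ℕ :=
  Set.ncard {s : Finset G | IsThreeAP s ∧ ∀ x ∈ s, ∀ y ∈ s, χ x = χ y}

/-- `R(3,G,2)`: the minimal number of monochromatic 3-term arithmetic progressions
over all 2-colorings of `G`. -/
noncomputable def RThree (G : Type*) [Group G] [Fintype G] [DecidableEq G] : ℕ :=
  sInf {m : ℕ | ∃ χ : G → ℤ, (∀ g, χ g = 1 ∨ χ g = -1) ∧ m = monoAPCount G χ}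

namespace RThreeAux

open Multiplicative DihedralGroup

variable (n : ℕ)

def phir : Multiplicative (ZMod n) → DihedralGroup n := fun a => .r a.toAdd
def phis : Multiplicative (ZMod n) → DihedralGroup n := fun a => .sr a.toAdd

lemma phir_inj : Function.Injective (phir n) := by
  intro a b h; simpa [phir] using h

lemma phis_inj : Function.Injective (phis n) := by
  intro a b h; simpa [phis] using h

lemma phir_mul (a b : Multiplicative (ZMod n)) :
    phir n (b * a) = r b.toAdd * r a.toAdd := by
  simp [phir, r_mul_r]

lemma phir_sq_mul (a b : Multiplicative (ZMod n)) :
    phir n (b ^ 2 * a) = (r b.toAdd) ^ 2 * r a.toAdd := by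
  simp [phir, r_mul_r, sq, toAdd_mul]

lemma phis_mul (a b : Multiplicative (ZMod n)) :
    phis n (b * a) = r (-b.toAdd) * sr a.toAdd := by
  simp [phis, r_mul_sr, sub_eq_add_neg, add_comm]

lemma phis_sq_mul (a b : Multiplicative (ZMod n)) :
    phis n (b ^ 2 * a) = (r (-b.toAdd)) ^ 2 * sr a.toAdd := by
  simp [phis, r_mul_sr, r_mul_r, sq, toAdd_mul]
  ring

lemma isThreeAP_image_phir {t : Finset (Multiplicative (ZMod n))} (h : IsThreeAP t) :
    IsThreeAP (t.image (phir n)) := by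
  obtain ⟨hc, a, b, rfl⟩ := h
  refine ⟨by rw [Finset.card_image_of_injective _ (phir_inj n)]; exact hc,
    r a.toAdd, r b.toAdd, ?_⟩
  simp only [Finset.image_insert, Finset.image_singleton]
  rw [phir_sq_mul, phir_mul]
  rfl

lemma isThreeAP_image_phis {t : Finset (Multiplicative (ZMod n))} (h : IsThreeAP t) :
    IsThreeAP (t.image (phis n)) := by
  obtain ⟨hc, a, b, rfl⟩ := h
  refine ⟨by rw [Finset.card_image_of_injective _ (phis_inj n)]; exact hc,
    sr a.toAdd, r (-b.toAdd), ?_⟩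
  simp only [Finset.image_insert, Finset.image_singleton]
  rw [phis_sq_mul, phis_mul]
  rfl

lemma ap_cases {s : Finset (DihedralGroup n)} (h : IsThreeAP s) :
    (∃ t, IsThreeAP t ∧ s = t.image (phir n)) ∨
    (∃ t, IsThreeAP t ∧ s = t.image (phis n)) := by
  obtain ⟨hc, a, b, hs⟩ := h
  cases b with
  | sr k =>
    exfalso
    have h2 : (sr k : DihedralGroup n) ^ 2 * a = a := by
      rw [sq, sr_mul_self, one_mul]
    rw [h2] at hs
    have hle : s.card ≤ 2 := by
      rw [hs]
      have h' : ({a, sr k * a, a} : Finset (DihedralGroup n)) = {a, sr k * a} := by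
        ext x; simp; tauto
      rw [h']
      exact (Finset.card_insert_le _ _).trans (by simp)
    omega
  | r k =>
    cases a with
    | r i =>
      left
      have e1 : phir n (ofAdd i) = r i := rfl
      have e2 : phir n (ofAdd k * ofAdd i) = r k * r i := by simp [phir, r_mul_r]
      have e3 : phir n ((ofAdd k) ^ 2 * ofAdd i) = (r k) ^ 2 * r i := by
        simp [phir, r_mul_r, sq, toAdd_mul]
      have himg : s = Finset.image (phir n)
          {ofAdd i, ofAdd k * ofAdd i, (ofAdd k) ^ 2 * ofAdd i} := by
        rw [hs]
        simp only [Finset.image_insert, Finset.image_singleton, e1, e2, e3]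
      refine ⟨_, ⟨?_, ofAdd i, ofAdd k, rfl⟩, himg⟩
      rw [himg, Finset.card_image_of_injective _ (phir_inj n)] at hc
      exact hc
    | sr i =>
      right
      have e1 : phis n (ofAdd i) = sr i := rfl
      have e2 : phis n (ofAdd (-k) * ofAdd i) = r k * sr i := by
        simp [phis, r_mul_sr, sub_eq_add_neg, add_comm]
      have e3 : phis n ((ofAdd (-k)) ^ 2 * ofAdd i) = (r k) ^ 2 * sr i := by
        simp [phis, r_mul_sr, r_mul_r, sq, toAdd_mul]
        ring
      have himg : s = Finset.image (phis n)
          {ofAdd i, ofAdd (-k) * ofAdd i, (ofAdd (-k)) ^ 2 * ofAdd i} := by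
        rw [hs]
        simp only [Finset.image_insert, Finset.image_singleton, e1, e2, e3]
      refine ⟨_, ⟨?_, ofAdd i, ofAdd (-k), rfl⟩, himg⟩
      rw [himg, Finset.card_image_of_injective _ (phis_inj n)] at hc
      exact hc

lemma mono_image {α β : Type*} [DecidableEq β] (f : α → β) (χ : β → ℤ) (t : Finset α) :
    (∀ x ∈ t.image f, ∀ y ∈ t.image f, χ x = χ y) ↔
      (∀ x ∈ t, ∀ y ∈ t, χ (f x) = χ (f y)) := by
  constructor
  · intro h x hx y hy
    exact h _ (Finset.mem_image_of_mem _ hx) _ (Finset.mem_image_of_mem _ hy)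
  · intro h x hx y hy
    obtain ⟨x', hx', rfl⟩ := Finset.mem_image.mp hx
    obtain ⟨y', hy', rfl⟩ := Finset.mem_image.mp hy
    exact h _ hx' _ hy'

lemma count_split [NeZero n] (χ : DihedralGroup n → ℤ) :
    monoAPCount (DihedralGroup n) χ
      = monoAPCount (Multiplicative (ZMod n)) (fun x => χ (phir n x))
        + monoAPCount (Multiplicative (ZMod n)) (fun x => χ (phis n x)) := by
  unfold monoAPCount
  have hset : {s : Finset (DihedralGroup n) | IsThreeAP s ∧ ∀ x ∈ s, ∀ y ∈ s, χ x = χ y}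
      = (Finset.image (phir n)) ''
          {t | IsThreeAP t ∧ ∀ x ∈ t, ∀ y ∈ t, χ (phir n x) = χ (phir n y)}
        ∪ (Finset.image (phis n)) ''
          {t | IsThreeAP t ∧ ∀ x ∈ t, ∀ y ∈ t, χ (phis n x) = χ (phis n y)} := by
    ext s
    constructor
    · rintro ⟨hap, hmono⟩
      rcases ap_cases n hap with ⟨t, ht, rfl⟩ | ⟨t, ht, rfl⟩
      · exact Or.inl ⟨t, ⟨ht, (mono_image _ _ _).mp hmono⟩, rfl⟩
      · exact Or.inr ⟨t, ⟨ht, (mono_image _ _ _).mp hmono⟩, rfl⟩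
    · rintro (⟨t, ⟨ht, hm⟩, rfl⟩ | ⟨t, ⟨ht, hm⟩, rfl⟩)
      · exact ⟨isThreeAP_image_phir n ht, (mono_image _ _ _).mpr hm⟩
      · exact ⟨isThreeAP_image_phis n ht, (mono_image _ _ _).mpr hm⟩
  have hdisj : Disjoint
      ((Finset.image (phir n)) ''
        {t | IsThreeAP t ∧ ∀ x ∈ t, ∀ y ∈ t, χ (phir n x) = χ (phir n y)})
      ((Finset.image (phis n)) ''
        {t | IsThreeAP t ∧ ∀ x ∈ t, ∀ y ∈ t, χ (phis n x) = χ (phis n y)}) := by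
    rw [Set.disjoint_left]
    rintro s ⟨t, ⟨⟨hc, _⟩, _⟩, rfl⟩ ⟨t', _, hst⟩
    have hne : t.Nonempty := Finset.card_pos.mp (by omega)
    obtain ⟨x, hx⟩ := hne
    have hmem : phir n x ∈ Finset.image (phis n) t' := by
      rw [hst]; exact Finset.mem_image_of_mem _ hx
    obtain ⟨y, _, hy⟩ := Finset.mem_image.mp hmem
    exact absurd hy (by simp [phir, phis])
  rw [hset, Set.ncard_union_eq hdisj (Set.toFinite _) (Set.toFinite _),
    Set.ncard_image_of_injective _ (Finset.image_injective (phir_inj n)),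
    Set.ncard_image_of_injective _ (Finset.image_injective (phis_inj n))]

end RThreeAux

theorem RThree_dihedral_eq_two_mul_cyclic (n : ℕ) [NeZero n] :
    RThree (DihedralGroup n) = 2 * RThree (Multiplicative (ZMod n)) := by
  classical
  open RThreeAux Multiplicative DihedralGroup in
  simp only [RThree]
  set A := {m : ℕ | ∃ χ : Multiplicative (ZMod n) → ℤ,
      (∀ g, χ g = 1 ∨ χ g = -1) ∧ m = monoAPCount (Multiplicative (ZMod n)) χ} with hA
  set B := {m : ℕ | ∃ χ : DihedralGroup n → ℤ,
      (∀ g, χ g = 1 ∨ χ g = -1) ∧ m = monoAPCount (DihedralGroup n) χ} with hB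
  have hAne : A.Nonempty :=
    ⟨monoAPCount (Multiplicative (ZMod n)) (fun _ => 1), fun _ => (1 : ℤ),
      fun _ => Or.inl rfl, rfl⟩
  obtain ⟨χ0, hχ0, hm0⟩ := Nat.sInf_mem hAne
  -- build a coloring of the dihedral group from two copies of χ0
  set χD : DihedralGroup n → ℤ := fun g =>
    match g with
    | .r i => χ0 (Multiplicative.ofAdd i)
    | .sr i => χ0 (Multiplicative.ofAdd i) with hχD
  have hr : (fun x => χD (RThreeAux.phir n x)) = χ0 := by
    funext x; simp [hχD, RThreeAux.phir]
  have hs : (fun x => χD (RThreeAux.phis n x)) = χ0 := by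
    funext x; simp [hχD, RThreeAux.phis]
  have hχDvalid : ∀ g, χD g = 1 ∨ χD g = -1 := by
    intro g
    cases g with
    | r i => exact hχ0 (Multiplicative.ofAdd i)
    | sr i => exact hχ0 (Multiplicative.ofAdd i)
  have hcnt : monoAPCount (DihedralGroup n) χD = 2 * sInf A := by
    rw [RThreeAux.count_split, hr, hs, ← hm0]; ring
  apply le_antisymm
  · exact Nat.sInf_le ⟨χD, hχDvalid, hcnt.symm⟩
  · have hBne : B.Nonempty :=
      ⟨monoAPCount (DihedralGroup n) (fun _ => 1), fun _ => (1 : ℤ),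
        fun _ => Or.inl rfl, rfl⟩
    obtain ⟨χ, hχ, hmB⟩ := Nat.sInf_mem hBne
    have h1 : sInf A ≤ monoAPCount (Multiplicative (ZMod n)) (fun x => χ (RThreeAux.phir n x)) :=
      Nat.sInf_le ⟨_, fun g => hχ _, rfl⟩
    have h2 : sInf A ≤ monoAPCount (Multiplicative (ZMod n)) (fun x => χ (RThreeAux.phis n x)) :=
      Nat.sInf_le ⟨_, fun g => hχ _, rfl⟩
    rw [hmB, RThreeAux.count_split]
    omega
end

section
/- Let G be a finite group with N = |G|, let k ≥ 5 be an odd integer not divisible by 3, and let φ be Euler's totient function. Then for every 2-coloring χ : G → {-1,1}, the number of monochromatic three-element sets of the form {a, b·a, b²·a} with a ∈ G and b ∈ G of order k is at least (N·N_k/8)·(1 − 3(k−φ(k))/φ(k)), where N_k is the number of elements of G of order k. -/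
/-!
Count the pairs `(a, b)` with `orderOf b = k` whose progression `a, b a, b² a` is monochromatic.
For signs, `4 · [x = y = z] = 1 + x y + x z + y z`, so four times this count is `N N_k` plus three
times the correlation `∑_b ∑_a χ(a) χ(b a)` over the elements `b` of order `k` (squaring permutes
them, `k` being odd). Summed over the whole cyclic group `⟨b⟩` the correlation is
`(1/k) ∑_a (∑_{c ∈ ⟨b⟩} χ(c a))² ≥ 0`. Raising to a power `t` coprime to `k` permutes the elements
of order `k`, so over all such `b` the powers `b^t` with `gcd(t, k) = 1` contribute `φ(k)` times the
correlation sum, while each of the other `k - φ(k)` powers contributes at least `-N` per `b`.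
Finally, since `k ≥ 5`, a progression set comes from at most two pairs, `(a, b)` and `(b² a, b⁻¹)`.
-/

open Finset
open scoped Nat

section Correlation

variable {G : Type*} [Group G] [Fintype G]

def correlation {R : Type*} [Semiring R] (f : G → R) (c : G) : R :=
  ∑ a, f a * f (c * a)

theorem sum_mul_translate_eq_correlation {R : Type*} [Semiring R] (f : G → R) (c d : G) :
    ∑ a, f (c * a) * f (d * a) = correlation f (d * c⁻¹) :=
  Fintype.sum_equiv (Equiv.mulLeft c) _ _ fun a => by simp [mul_assoc]

theorem card_mul_sum_correlation_eq_sum_sq {R : Type*} [CommRing R] (H : Subgroup G) [Fintype H]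
    (f : G → R) :
    Fintype.card H * ∑ h : H, correlation f h = ∑ a, (∑ h : H, f (h * a)) ^ 2 := by
  calc (Fintype.card H : R) * ∑ h : H, correlation f h
      = ∑ h : H, ∑ h' : H, correlation f (h' * h⁻¹ : H) := by
        rw [Fintype.card_eq_sum_ones (α := H), Nat.cast_sum, sum_mul]
        refine sum_congr rfl fun h _ => ?_
        rw [Nat.cast_one, one_mul]
        exact (Fintype.sum_equiv (Equiv.mulRight h⁻¹) (fun h' : H => correlation f (h' * h⁻¹ : H))
          (fun h' : H => correlation f h') fun _ => rfl).symm
    _ = ∑ a, (∑ h : H, f (h * a)) ^ 2 := by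
        simp_rw [sq, sum_mul_sum, Subgroup.coe_mul, Subgroup.coe_inv,
          ← sum_mul_translate_eq_correlation]
        exact sum_comm_cycle

theorem sum_correlation_subgroup_nonneg {R : Type*} [CommRing R] [LinearOrder R]
    [IsStrictOrderedRing R] (H : Subgroup G) [Fintype H] (f : G → R) :
    0 ≤ ∑ h : H, correlation f h := by
  have h := card_mul_sum_correlation_eq_sum_sq H f
  refine nonneg_of_mul_nonneg_right (h ▸ sum_nonneg fun a _ => sq_nonneg _) ?_
  exact_mod_cast Fintype.card_pos

theorem sum_range_orderOf_correlation_nonneg {R : Type*} [CommRing R] [LinearOrder R]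
    [IsStrictOrderedRing R] (f : G → R) (b : G) :
    0 ≤ ∑ t ∈ range (orderOf b), correlation f (b ^ t) := by
  classical
  have hb : IsOfFinOrder b := isOfFinOrder_of_finite b
  rw [← Fin.sum_univ_eq_sum_range (fun t => correlation f (b ^ t)),
    Fintype.sum_equiv (finEquivZPowers hb) _ (fun c => correlation f c) fun _ => by
      rw [finEquivZPowers_apply]]
  exact sum_correlation_subgroup_nonneg _ f

theorem sum_pow_eq_sum_of_coprime {M : Type*} [AddCommMonoid M] (f : G → M) {k t : ℕ}
    (ht : t.Coprime k) :
    ∑ b ∈ univ.filter (orderOf · = k), f (b ^ t) = ∑ b ∈ univ.filter (orderOf · = k), f b := by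
  have hinv : ∀ b : G, orderOf b = k → ∀ m n, m * n = t ^ φ k → (b ^ m) ^ n = b := by
    intro b hb m n hmn
    rw [← pow_mul, hmn, ← pow_one b, ← pow_mul, one_mul, pow_eq_pow_iff_modEq, hb]
    exact Nat.ModEq.pow_totient ht
  -- `t ^ (φ k - 1)` inverts `t` modulo `k` by Euler's theorem.
  have hφ : ∀ b : G, orderOf b = k → t ^ φ k = t * t ^ (φ k - 1) := fun b hb => by
    rw [← pow_succ', Nat.sub_add_cancel (Nat.totient_pos.mpr (hb ▸ orderOf_pos b))]
  refine sum_nbij' (· ^ t) (· ^ t ^ (φ k - 1)) (fun b hb => ?_) (fun b hb => ?_)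
    (fun b hb => ?_) (fun b hb => ?_) fun _ _ => rfl
  all_goals simp only [mem_filter, mem_univ, true_and] at hb ⊢
  · exact (Nat.Coprime.orderOf_pow (hb ▸ ht.symm)).trans hb
  · exact (Nat.Coprime.orderOf_pow (hb ▸ (ht.pow_left _).symm)).trans hb
  · exact hinv b hb _ _ (hφ b hb).symm
  · exact hinv b hb _ _ ((mul_comm _ _).trans (hφ b hb).symm)

variable {χ : G → ℤ}

theorem correlation_le_card (hχ : ∀ g, χ g = 1 ∨ χ g = -1) (c : G) :
    correlation χ c ≤ Fintype.card G := by
  rw [correlation, Fintype.card_eq_sum_ones, Nat.cast_sum]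
  refine sum_le_sum fun a _ => ?_
  rcases hχ a with h | h <;> rcases hχ (c * a) with h' | h' <;> simp [h, h']

theorem neg_le_sum_coprime_correlation (hχ : ∀ g, χ g = 1 ∨ χ g = -1) (b : G) :
    -(((orderOf b - φ (orderOf b) : ℕ) : ℤ) * Fintype.card G) ≤
      ∑ t ∈ (range (orderOf b)).filter (orderOf b).Coprime, correlation χ (b ^ t) := by
  set k := orderOf b
  have hsplit := sum_filter_add_sum_filter_not (range k) k.Coprime fun t => correlation χ (b ^ t)
  have hrest : ∑ t ∈ (range k).filter (¬ k.Coprime ·), correlation χ (b ^ t) ≤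
      ((k - φ k : ℕ) : ℤ) * Fintype.card G := by
    calc _ ≤ ∑ t ∈ (range k).filter (¬ k.Coprime ·), (Fintype.card G : ℤ) :=
          sum_le_sum fun t _ => correlation_le_card hχ _
      _ = _ := by
        rw [sum_const, nsmul_eq_mul, filter_not, card_sdiff_of_subset (filter_subset _ _),
          card_range, Nat.totient_eq_card_coprime]
  linarith [sum_range_orderOf_correlation_nonneg χ b]

theorem neg_le_totient_mul_sum_correlation (hχ : ∀ g, χ g = 1 ∨ χ g = -1) (k : ℕ) :
    -((orderCount G k * (k - φ k : ℕ) * Fintype.card G : ℕ) : ℤ) ≤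
      φ k * ∑ b ∈ univ.filter (orderOf · = k), correlation χ b := by
  calc -((orderCount G k * (k - φ k : ℕ) * Fintype.card G : ℕ) : ℤ)
      = ∑ b ∈ univ.filter (orderOf · = k), -(((k - φ k : ℕ) : ℤ) * Fintype.card G) := by
        rw [sum_const, orderCount, nsmul_eq_mul]; push_cast; ring
    _ ≤ ∑ b ∈ univ.filter (orderOf · = k),
          ∑ t ∈ (range k).filter k.Coprime, correlation χ (b ^ t) :=
        sum_le_sum fun b hb => (mem_filter.mp hb).2 ▸ neg_le_sum_coprime_correlation hχ b
    _ = φ k * ∑ b ∈ univ.filter (orderOf · = k), correlation χ b := by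
        rw [sum_comm, sum_congr rfl fun t ht =>
          sum_pow_eq_sum_of_coprime (correlation χ) (mem_filter.mp ht).2.symm,
          sum_const, nsmul_eq_mul, Nat.totient_eq_card_coprime]

noncomputable def monoPairs (χ : G → ℤ) (k : ℕ) : Finset (G × G) :=
  univ.filter fun p => orderOf p.2 = k ∧ χ p.1 = χ (p.2 * p.1) ∧ χ p.1 = χ (p.2 ^ 2 * p.1)

theorem four_mul_ite_eq {x y z : ℤ} (hx : x = 1 ∨ x = -1) (hy : y = 1 ∨ y = -1)
    (hz : z = 1 ∨ z = -1) :
    4 * (if x = y ∧ x = z then 1 else 0) = 1 + x * y + x * z + y * z := by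
  rcases hx with rfl | rfl <;> rcases hy with rfl | rfl <;> rcases hz with rfl | rfl <;> decide

theorem four_mul_card_filter_mono_eq (hχ : ∀ g, χ g = 1 ∨ χ g = -1) (b : G) :
    4 * (#{a | χ a = χ (b * a) ∧ χ a = χ (b ^ 2 * a)} : ℤ) =
      Fintype.card G + 2 * correlation χ b + correlation χ (b ^ 2) := by
  have hshift : ∑ a, χ (b * a) * χ (b ^ 2 * a) = correlation χ b :=
    Fintype.sum_equiv (Equiv.mulLeft b) _ _ fun a => by simp [pow_two, mul_assoc]
  rw [natCast_card_filter, mul_sum, sum_congr rfl fun a _ => four_mul_ite_eq (hχ a)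
    (hχ (b * a)) (hχ (b ^ 2 * a)), sum_add_distrib, sum_add_distrib, sum_add_distrib, hshift]
  simp only [sum_const, card_univ, nsmul_eq_mul, mul_one, correlation]
  ring

theorem four_mul_card_monoPairs_eq (hχ : ∀ g, χ g = 1 ∨ χ g = -1) {k : ℕ} (hk : Odd k) :
    4 * (#(monoPairs χ k) : ℤ) =
      Fintype.card G * orderCount G k + 3 * ∑ b ∈ univ.filter (orderOf · = k), correlation χ b := by
  have hsq := sum_pow_eq_sum_of_coprime (correlation χ) (Nat.coprime_two_left.mpr hk)
  have hcard : (#(monoPairs χ k) : ℤ) = ∑ b ∈ univ.filter (orderOf · = k),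
      (#{a | χ a = χ (b * a) ∧ χ a = χ (b ^ 2 * a)} : ℤ) := by
    rw [monoPairs, natCast_card_filter, Fintype.sum_prod_type_right, sum_filter]
    refine sum_congr rfl fun b _ => ?_
    split_ifs with hb <;> simp [hb]
  rw [hcard, mul_sum, sum_congr rfl fun b _ => four_mul_card_filter_mono_eq hχ b, sum_add_distrib,
    sum_add_distrib, hsq, sum_const, ← mul_sum, orderCount, nsmul_eq_mul]
  ring

theorem card_monoPairs_ge (hχ : ∀ g, χ g = 1 ∨ χ g = -1) {k : ℕ} (hk : Odd k) :
    (Fintype.card G : ℝ) * orderCount G k / 4 * (1 - 3 * ((k : ℝ) - φ k) / φ k) ≤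
      #(monoPairs χ k) := by
  have hφ : (0 : ℝ) < φ k := by exact_mod_cast Nat.totient_pos.mpr hk.pos
  have hpairs : 4 * (#(monoPairs χ k) : ℝ) = Fintype.card G * orderCount G k +
      3 * ((∑ b ∈ univ.filter (orderOf · = k), correlation χ b : ℤ) : ℝ) := by
    exact_mod_cast four_mul_card_monoPairs_eq hχ hk
  have hcorr : -((orderCount G k : ℝ) * (k - φ k) * Fintype.card G) ≤
      φ k * ((∑ b ∈ univ.filter (orderOf · = k), correlation χ b : ℤ) : ℝ) := by
    have := neg_le_totient_mul_sum_correlation hχ k (G := G)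
    rw [← Nat.cast_sub (Nat.totient_le k)]
    exact_mod_cast this
  have hS : -((orderCount G k : ℝ) * (k - φ k) * Fintype.card G) / φ k ≤
      ((∑ b ∈ univ.filter (orderOf · = k), correlation χ b : ℤ) : ℝ) := by
    rwa [div_le_iff₀' hφ]
  calc (Fintype.card G : ℝ) * orderCount G k / 4 * (1 - 3 * ((k : ℝ) - φ k) / φ k)
      = (Fintype.card G * orderCount G k +
          3 * (-((orderCount G k : ℝ) * (k - φ k) * Fintype.card G) / φ k)) / 4 := by
        field_simp
        ring
    _ ≤ #(monoPairs χ k) := by linarith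

end Correlation

section ThreeAP

variable {G : Type*} [Group G]

theorem eq_of_zpow_mul_eq {a b : G} {m n : ℤ} (h : b ^ m * a = b ^ n * a)
    (hmn : |m - n| < orderOf b) : m = n := by
  have hdvd : (orderOf b : ℤ) ∣ m - n :=
    orderOf_dvd_iff_zpow_eq_one.mpr (by rw [zpow_sub, mul_right_cancel h, mul_inv_cancel])
  exact sub_eq_zero.mp (Int.eq_zero_of_abs_lt_dvd hdvd hmn)

variable [DecidableEq G]

def threeAP (a b : G) : Finset G := {a, b * a, b ^ 2 * a}

theorem card_threeAP {b : G} (hb : b ≠ 1) (hb2 : b ^ 2 ≠ 1) (a : G) : #(threeAP a b) = 3 := by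
  refine card_eq_three.mpr ⟨a, b * a, b ^ 2 * a, ?_, ?_, ?_, rfl⟩
  · simpa [eq_comm] using hb
  · simpa [eq_comm] using hb2
  · simpa [pow_two, eq_comm] using hb

theorem card_threeAP_of_five_le_orderOf {b : G} (hb : 5 ≤ orderOf b) (a : G) :
    #(threeAP a b) = 3 :=
  card_threeAP (fun h => by simp [h] at hb)
    (fun h => by have := orderOf_le_of_pow_eq_one two_pos h; omega) a

theorem exists_zpow_mul_of_mem_threeAP {a b x : G} (hx : x ∈ threeAP a b) :
    ∃ i : ℤ, 0 ≤ i ∧ i ≤ 2 ∧ x = b ^ i * a := by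
  simp only [threeAP, mem_insert, mem_singleton] at hx
  rcases hx with rfl | rfl | rfl
  exacts [⟨0, by simp⟩, ⟨1, by simp⟩, ⟨2, by simp⟩]

theorem threeAP_eq_threeAP {a a' b b' : G} (hb : 5 ≤ orderOf b)
    (h : threeAP a' b' = threeAP a b) :
    (a' = a ∧ b' = b) ∨ (a' = b ^ 2 * a ∧ b' = b⁻¹) := by
  have mem : ∀ x ∈ threeAP a' b', ∃ i : ℤ, 0 ≤ i ∧ i ≤ 2 ∧ x = b ^ i * a :=
    fun x hx => exists_zpow_mul_of_mem_threeAP (h ▸ hx)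
  obtain ⟨i, hi0, hi2, hi⟩ := mem a' (by simp [threeAP])
  obtain ⟨j, hj0, hj2, hj⟩ := mem (b' * a') (by simp [threeAP])
  obtain ⟨l, hl0, hl2, hl⟩ := mem (b' ^ 2 * a') (by simp [threeAP])
  have hb' : b' = b ^ (j - i) := by
    rw [hi] at hj
    calc b' = b' * (b ^ i * a) * (b ^ i * a)⁻¹ := by group
      _ = b ^ (j - i) := by rw [hj]; group
  have hlj : l = 2 * j - i := by
    refine eq_of_zpow_mul_eq (a := a) (b := b) ?_ (by rw [abs_lt]; omega)
    rw [← hl, hb', hi]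
    group
  have hb'1 : b' ≠ 1 := by
    rintro rfl
    have := congrArg card h
    rw [card_threeAP_of_five_le_orderOf hb] at this
    simp [threeAP] at this
  have hij : i ≠ j := by
    rintro rfl
    simp [hb'] at hb'1
  obtain ⟨rfl, rfl⟩ | ⟨rfl, rfl⟩ : (i = 0 ∧ j = 1) ∨ (i = 2 ∧ j = 1) := by omega
  · exact .inl ⟨by simpa using hi, by simpa using hb'⟩
  · exact .inr ⟨by simpa using hi, by simpa using hb'⟩

theorem card_monoPairs_le_two_mul [Fintype G] (χ : G → ℤ) {k : ℕ} (hk : 5 ≤ k) :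
    #(monoPairs χ k) ≤ 2 * Set.ncard {s : Finset G | s.card = 3 ∧
        (∃ a b : G, orderOf b = k ∧ s = {a, b * a, b ^ 2 * a}) ∧
        ∀ x ∈ s, ∀ y ∈ s, χ x = χ y} := by
  set f : G × G → Finset G := fun p => threeAP p.1 p.2
  have hfiber : ∀ s ∈ (monoPairs χ k).image f, #{p ∈ monoPairs χ k | f p = s} ≤ 2 := by
    simp only [mem_image, Prod.exists]
    rintro _ ⟨a, b, hab, rfl⟩
    have hb : 5 ≤ orderOf b := by simp_all [monoPairs]
    calc #{p ∈ monoPairs χ k | f p = f (a, b)}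
        ≤ #({(a, b), (b ^ 2 * a, b⁻¹)} : Finset (G × G)) := by
          refine card_le_card fun p hp => ?_
          rcases threeAP_eq_threeAP hb (mem_filter.mp hp).2 with ⟨h1, h2⟩ | ⟨h1, h2⟩ <;>
            simp [Prod.ext_iff, h1, h2]
      _ ≤ 2 := card_le_two
  have himage : ↑((monoPairs χ k).image f) ⊆ {s : Finset G | s.card = 3 ∧
      (∃ a b : G, orderOf b = k ∧ s = {a, b * a, b ^ 2 * a}) ∧ ∀ x ∈ s, ∀ y ∈ s, χ x = χ y} := by
    simp only [coe_image, Set.image_subset_iff]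
    rintro ⟨a, b⟩ hab
    simp only [monoPairs, coe_filter, mem_univ, true_and] at hab
    obtain ⟨hb, h1, h2⟩ := hab
    dsimp only at hb h1 h2
    refine ⟨card_threeAP_of_five_le_orderOf (hb ▸ hk) a, ⟨a, b, hb, rfl⟩, ?_⟩
    simp only [f, threeAP, mem_insert, mem_singleton]
    rintro x (rfl | rfl | rfl) y (rfl | rfl | rfl) <;> omega
  calc #(monoPairs χ k) ≤ 2 * #((monoPairs χ k).image f) := card_le_mul_card_image _ 2 hfiber
    _ ≤ _ := by
      gcongr
      rw [← Set.ncard_coe_finset]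
      exact Set.ncard_le_ncard himage (Set.toFinite _)

end ThreeAP

theorem mono_threeAP_order_k_lower_bound_general (G : Type*) [Group G] [Fintype G] [DecidableEq G]
    (k : ℕ) (hk : 5 ≤ k) (hodd : Odd k)
    (χ : G → ℤ) (hχ : ∀ g, χ g = 1 ∨ χ g = -1) :
    (Fintype.card G : ℝ) * (orderCount G k) / 8 *
        (1 - 3 * ((k : ℝ) - Nat.totient k) / Nat.totient k) ≤
      Set.ncard {s : Finset G | s.card = 3 ∧
        (∃ a b : G, orderOf b = k ∧ s = {a, b * a, b ^ 2 * a}) ∧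
        ∀ x ∈ s, ∀ y ∈ s, χ x = χ y} := by
  have hpairs := card_monoPairs_ge hχ hodd
  have hsets := (Nat.cast_le (α := ℝ)).mpr (card_monoPairs_le_two_mul χ hk)
  push_cast at hsets
  linarith

theorem mono_threeAP_order_k_lower_bound (G : Type*) [Group G] [Fintype G] [DecidableEq G]
    (k : ℕ) (hk : 5 ≤ k) (hodd : Odd k) (h3 : ¬ 3 ∣ k)
    (χ : G → ℤ) (hχ : ∀ g, χ g = 1 ∨ χ g = -1) :
    (Fintype.card G : ℝ) * (orderCount G k) / 8 *
        (1 - 3 * ((k : ℝ) - Nat.totient k) / Nat.totient k) ≤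
      Set.ncard {s : Finset G | s.card = 3 ∧
        (∃ a b : G, orderOf b = k ∧ s = {a, b * a, b ^ 2 * a}) ∧
        ∀ x ∈ s, ∀ y ∈ s, χ x = χ y} :=
  mono_threeAP_order_k_lower_bound_general G k hk hodd χ hχ
end

section
/- Every 2-coloring of the symmetric group S₅ on five letters contains at least 90 monochromatic 3-term arithmetic progressions; that is, R(3, S₅, 2) ≥ 90. -/
open Finset

/-!
Write `f b = ∑ a, χ a * χ (b * a)`. For `b ^ 2 ≠ 1`, the number of `a` such that `a`, `b * a`,
`b ^ 2 * a` have one colour is `(|G| + 2 f b + f (b ^ 2)) / 4`, and a monochromatic 3-AP arises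
from at most six pairs `(b, a)`; so it suffices to bound `∑_{b ^ 2 ≠ 1} (2 f b + f (b ^ 2))` below.
For every subgroup `H`, `|H| ∑_{h ∈ H} f h = ∑ a, (∑_{h ∈ H} χ (h * a)) ^ 2 ≥ 0`. Taking `H = S₅`
bounds `∑_{b ^ 2 ≠ 1} f b` by the sum over the involutions, whose part over the double
transpositions cancels exactly against the terms `f (b ^ 2)` of the 4-cycles; the remaining terms
`f (b ^ 2)` are bounded through the cyclic subgroups of orders 3 and 5 (for order 5 after using
that squaring permutes the 5-cycles).
-/

section Progressions

variable {G : Type*} [Group G] [DecidableEq G]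

def progression (b a : G) : Finset G := {a, b * a, b ^ 2 * a}

lemma isThreeAP_progression (a : G) {b : G} (hb : b ^ 2 ≠ 1) : IsThreeAP (progression b a) := by
  have hb₁ : b ≠ 1 := by rintro rfl; simp at hb
  refine ⟨card_eq_three.2 ⟨a, b * a, b ^ 2 * a, ?_, ?_, ?_, rfl⟩, a, b, rfl⟩
  · simpa [eq_comm] using hb₁
  · simpa [eq_comm] using hb
  · rw [sq, mul_assoc]
    simpa [eq_comm] using hb₁

lemma card_filter_progression_eq_le_six {s : Finset G} (hs : #s = 3) (P : Finset ((_ : G) × G))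
    (hP : ∀ p ∈ P, p.1 ≠ 1) : #{p ∈ P | progression p.1 p.2 = s} ≤ 6 := by
  calc #{p ∈ P | progression p.1 p.2 = s} ≤ #s.offDiag := by
        refine card_le_card_of_injOn (fun p => (p.2, p.1 * p.2)) (fun p hp => ?_) ?_
        · obtain ⟨hpP, rfl⟩ := mem_filter.1 hp
          simp [progression, eq_comm (a := p.2), hP p hpP]
        · intro p _ q _ h
          simp only [Prod.mk.injEq] at h
          exact Sigma.ext (mul_right_cancel (h.1 ▸ h.2)) (heq_of_eq h.1)
    _ = 6 := by simp [offDiag_card, hs]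

variable [Fintype G]

def monoStarts (χ : G → ℤ) (b : G) : Finset G :=
  {a | χ a = χ (b * a) ∧ χ (b * a) = χ (b ^ 2 * a)}

lemma sum_card_monoStarts_le (χ : G → ℤ) :
    ∑ b with b ^ 2 ≠ 1, #(monoStarts χ b) ≤ 6 * monoAPCount G χ := by
  set P := ({b | b ^ 2 ≠ 1} : Finset G).sigma (monoStarts χ)
  have hP : ∀ p ∈ P, p.1 ^ 2 ≠ 1 ∧ p.2 ∈ monoStarts χ p.1 := by simp [P]
  have himage : (P.image fun p => progression p.1 p.2 : Set (Finset G)) ⊆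
      {s | IsThreeAP s ∧ ∀ x ∈ s, ∀ y ∈ s, χ x = χ y} := by
    intro s hs
    obtain ⟨p, hp, rfl⟩ := mem_image.1 (mem_coe.1 hs)
    obtain ⟨hb, ha⟩ := hP p hp
    simp only [monoStarts, mem_filter, mem_univ, true_and] at ha
    refine ⟨isThreeAP_progression p.2 hb, ?_⟩
    simp only [progression, mem_insert, mem_singleton]
    rintro x (rfl | rfl | rfl) y (rfl | rfl | rfl) <;> omega
  calc ∑ b with b ^ 2 ≠ 1, #(monoStarts χ b) = #P := (card_sigma _ _).symm
    _ ≤ 6 * #(P.image fun p => progression p.1 p.2) := by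
        refine card_le_mul_card_image _ _ fun s hs => ?_
        obtain ⟨p, hp, rfl⟩ := mem_image.1 hs
        refine card_filter_progression_eq_le_six (isThreeAP_progression p.2 (hP p hp).1).1 P
          fun q hq h => (hP q hq).1 (by simp [h])
    _ ≤ 6 * monoAPCount G χ := by
        rw [monoAPCount, ← Set.ncard_coe_finset]
        exact Nat.mul_le_mul_left 6 (Set.ncard_le_ncard himage (Set.toFinite _))

lemma le_RThree {n : ℕ}
    (h : ∀ χ : G → ℤ, (∀ g, χ g = 1 ∨ χ g = -1) → n ≤ monoAPCount G χ) : n ≤ RThree G :=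
  le_csInf ⟨_, fun _ => 1, fun _ => Or.inl rfl, rfl⟩ fun _ ⟨χ, hχ, hm⟩ => hm ▸ h χ hχ

end Progressions

lemma sum_comp_sq_filter_pow_eq_one_of_odd {G M : Type*} [Group G] [Fintype G] [DecidableEq G]
    [AddCommMonoid M] {n : ℕ} (hn : Odd n) (F : G → M) :
    ∑ b with b ^ n = 1 ∧ b ≠ 1, F (b ^ 2) = ∑ b with b ^ n = 1 ∧ b ≠ 1, F b := by
  obtain ⟨m, rfl⟩ := hn
  have hsq : ∀ b : G, b ^ (2 * m + 1) = 1 → (b ^ 2) ^ (m + 1) = b := fun b hb => by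
    rw [← pow_mul, show 2 * (m + 1) = 2 * m + 1 + 1 by ring, pow_succ, hb, one_mul]
  have hroot : ∀ b : G, b ^ (2 * m + 1) = 1 → (b ^ (m + 1)) ^ 2 = b := fun b hb => by
    rw [← pow_mul, show (m + 1) * 2 = 2 * m + 1 + 1 by ring, pow_succ, hb, one_mul]
  refine sum_nbij' (· ^ 2) (· ^ (m + 1)) ?_ ?_ ?_ ?_ fun _ _ => rfl <;>
    simp only [mem_filter, mem_univ, true_and] <;> rintro b ⟨hb, hb₁⟩
  · refine ⟨by rw [← pow_mul, mul_comm, pow_mul, hb, one_pow], fun h => hb₁ ?_⟩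
    rw [← hsq b hb, h, one_pow]
  · refine ⟨by rw [← pow_mul, mul_comm, pow_mul, hb, one_pow], fun h => hb₁ ?_⟩
    rw [← hroot b hb, h, one_pow]
  · exact hsq b hb
  · exact hroot b hb

section Autocorrelation

variable {G : Type*} [Group G] [Fintype G] (χ : G → ℤ)

def autocorr (b : G) : ℤ := ∑ a, χ a * χ (b * a)

lemma sum_mul_eq_autocorr (c d : G) :
    ∑ a, χ (c * a) * χ (d * a) = autocorr χ (d * c⁻¹) := by
  rw [autocorr, ← Equiv.sum_comp (Equiv.mulLeft c) fun a => χ a * χ (d * c⁻¹ * a)]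
  simp [mul_assoc]

lemma autocorr_inv (b : G) : autocorr χ b⁻¹ = autocorr χ b := by
  rw [← one_mul b⁻¹, ← sum_mul_eq_autocorr, autocorr]
  simp [mul_comm]

lemma autocorr_pow_sub {b : G} {n i : ℕ} (hb : b ^ n = 1) (hi : i ≤ n) :
    autocorr χ (b ^ (n - i)) = autocorr χ (b ^ i) := by
  have h : b ^ (n - i) * b ^ i = 1 := by rw [← pow_add, Nat.sub_add_cancel hi, hb]
  rw [eq_inv_of_mul_eq_one_left h, autocorr_inv]

lemma sum_sq_sum_subgroup_eq (H : Subgroup G) [Fintype H] :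
    ∑ a, (∑ h : H, χ (h * a)) ^ 2 = Fintype.card H * ∑ h : H, autocorr χ h := by
  calc ∑ a, (∑ h : H, χ (h * a)) ^ 2
      = ∑ h : H, ∑ k : H, ∑ a, χ (h * a) * χ (k * a) := by
        simp_rw [sq, sum_mul_sum]
        rw [sum_comm]
        exact sum_congr rfl fun h _ => sum_comm
    _ = ∑ h : H, ∑ k : H, autocorr χ ↑(k * h⁻¹) := by
        simp only [sum_mul_eq_autocorr, Subgroup.coe_mul, Subgroup.coe_inv]
    _ = ∑ _h : H, ∑ k : H, autocorr χ k :=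
        sum_congr rfl fun h _ => Equiv.sum_comp (Equiv.mulRight h⁻¹) fun k : H => autocorr χ k
    _ = Fintype.card H * ∑ h : H, autocorr χ h := by
        simp

lemma sum_autocorr_subgroup_nonneg (H : Subgroup G) [Fintype H] :
    0 ≤ ∑ h : H, autocorr χ h := by
  refine nonneg_of_mul_nonneg_right ?_ (Nat.cast_pos.2 (Fintype.card_pos (α := H)))
  rw [← sum_sq_sum_subgroup_eq]
  positivity

lemma sum_autocorr_nonneg : 0 ≤ ∑ b, autocorr χ b := by
  classical
  have := sum_autocorr_subgroup_nonneg χ ⊤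
  rwa [Fintype.sum_equiv Subgroup.topEquiv.toEquiv (fun h => autocorr χ h) (autocorr χ)
    fun _ => rfl] at this

lemma sum_range_orderOf_autocorr_nonneg (b : G) :
    0 ≤ ∑ i ∈ range (orderOf b), autocorr χ (b ^ i) := by
  classical
  have := sum_autocorr_subgroup_nonneg χ (Subgroup.zpowers b)
  rwa [← Fintype.sum_equiv (finEquivZPowers (isOfFinOrder_of_finite b))
    (fun i => autocorr χ (b ^ (i : ℕ))) _ fun i => by simp [finEquivZPowers_apply],
    Fin.sum_univ_eq_sum_range (fun i => autocorr χ (b ^ i))] at this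

end Autocorrelation

section Coloring

variable {G : Type*} [Group G] [Fintype G] {χ : G → ℤ} (hχ : ∀ g, χ g = 1 ∨ χ g = -1)
include hχ

lemma autocorr_one : autocorr χ 1 = Fintype.card G := by
  have h : ∀ a, χ a * χ a = 1 := fun a => by rcases hχ a with h | h <;> simp [h]
  simp [autocorr, h]

lemma abs_autocorr_le (b : G) : |autocorr χ b| ≤ Fintype.card G := by
  have h : ∀ a, |χ a| = 1 := fun a => by rcases hχ a with h | h <;> simp [h]
  calc |autocorr χ b| ≤ ∑ a, |χ a * χ (b * a)| := abs_sum_le_sum_abs _ _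
    _ = Fintype.card G := by simp [abs_mul, h]

lemma neg_card_le_two_mul_autocorr_of_orderOf_eq_three {b : G} (hb : orderOf b = 3) :
    -(Fintype.card G : ℤ) ≤ 2 * autocorr χ b := by
  have hb₃ : b ^ 3 = 1 := hb ▸ pow_orderOf_eq_one b
  have hsum := sum_range_orderOf_autocorr_nonneg χ b
  have hinv : autocorr χ (b ^ 2) = autocorr χ b := by
    simpa using autocorr_pow_sub χ hb₃ (i := 1) (by norm_num)
  rw [hb] at hsum
  simp only [sum_range_succ, range_one, sum_singleton, pow_zero, pow_one, autocorr_one hχ] at hsum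
  linarith

lemma neg_card_le_two_mul_autocorr_add_of_orderOf_eq_five {b : G} (hb : orderOf b = 5) :
    -(Fintype.card G : ℤ) ≤ 2 * (autocorr χ b + autocorr χ (b ^ 2)) := by
  have hb₅ : b ^ 5 = 1 := hb ▸ pow_orderOf_eq_one b
  have hsum := sum_range_orderOf_autocorr_nonneg χ b
  have hinv₁ : autocorr χ (b ^ 4) = autocorr χ b := by
    simpa using autocorr_pow_sub χ hb₅ (i := 1) (by norm_num)
  have hinv₂ : autocorr χ (b ^ 3) = autocorr χ (b ^ 2) :=
    autocorr_pow_sub χ hb₅ (i := 2) (by norm_num)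
  rw [hb] at hsum
  simp only [sum_range_succ, range_one, sum_singleton, pow_zero, pow_one, autocorr_one hχ] at hsum
  linarith

lemma four_mul_card_monoStarts (b : G) :
    4 * (#(monoStarts χ b) : ℤ) = Fintype.card G + 2 * autocorr χ b + autocorr χ (b ^ 2) := by
  have hpt : ∀ a, (if χ a = χ (b * a) ∧ χ (b * a) = χ (b ^ 2 * a) then 4 else 0 : ℤ) =
      1 + χ a * χ (b * a) + χ (b * a) * χ (b ^ 2 * a) + χ a * χ (b ^ 2 * a) := fun a => by
    rcases hχ a with h₀ | h₀ <;> rcases hχ (b * a) with h₁ | h₁ <;>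
      rcases hχ (b ^ 2 * a) with h₂ | h₂ <;> simp [h₀, h₁, h₂]
  have hmid : ∑ a, χ (b * a) * χ (b ^ 2 * a) = autocorr χ b := by
    rw [sum_mul_eq_autocorr, sq, mul_inv_cancel_right]
  rw [monoStarts, card_filter]
  push_cast
  rw [mul_sum]
  simp only [mul_ite, mul_one, mul_zero, hpt, sum_add_distrib, hmid]
  simp only [sum_const, card_univ, Int.nsmul_eq_mul, mul_one, autocorr]
  ring

lemma neg_card_mul_card_le_two_mul_sum_autocorr_sq_of_pow_six [DecidableEq G] :
    -(Fintype.card G * #{b : G | b ^ 6 = 1 ∧ b ^ 2 ≠ 1} : ℤ) ≤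
      2 * ∑ b with b ^ 6 = 1 ∧ b ^ 2 ≠ 1, autocorr χ (b ^ 2) := by
  rw [mul_sum, ← neg_mul, mul_comm, ← nsmul_eq_mul, ← sum_const]
  refine sum_le_sum fun b hb => ?_
  obtain ⟨hb₆, hb₂⟩ := (mem_filter.1 hb).2
  exact neg_card_le_two_mul_autocorr_of_orderOf_eq_three hχ
    (orderOf_eq_prime (by rw [← pow_mul, hb₆]) hb₂)

lemma neg_card_mul_card_le_four_mul_sum_autocorr_sq_of_pow_five [DecidableEq G] :
    -(Fintype.card G * #{b : G | b ^ 5 = 1 ∧ b ≠ 1} : ℤ) ≤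
      4 * ∑ b with b ^ 5 = 1 ∧ b ≠ 1, autocorr χ (b ^ 2) := by
  have : Fact (Nat.Prime 5) := ⟨by norm_num⟩
  calc -(Fintype.card G * #{b : G | b ^ 5 = 1 ∧ b ≠ 1} : ℤ)
      ≤ ∑ b with b ^ 5 = 1 ∧ b ≠ 1, 2 * (autocorr χ b + autocorr χ (b ^ 2)) := by
        rw [← neg_mul, mul_comm, ← nsmul_eq_mul, ← sum_const]
        refine sum_le_sum fun b hb => ?_
        obtain ⟨hb₅, hb₁⟩ := (mem_filter.1 hb).2
        exact neg_card_le_two_mul_autocorr_add_of_orderOf_eq_five hχ (orderOf_eq_prime hb₅ hb₁)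
    _ = 4 * ∑ b with b ^ 5 = 1 ∧ b ≠ 1, autocorr χ (b ^ 2) := by
        rw [← mul_sum, sum_add_distrib,
          ← sum_comp_sq_filter_pow_eq_one_of_odd (by decide) (autocorr χ)]
        ring

end Coloring

section SymmetricGroupFive

local notation "S₅" => Equiv.Perm (Fin 5)

set_option maxRecDepth 10000

lemma card_perm_fin_five : Fintype.card S₅ = 120 := by
  rw [Fintype.card_perm, Fintype.card_fin]
  rfl

lemma card_sq_ne_one_perm_five : #{b : S₅ | b ^ 2 ≠ 1} = 94 := by decide

lemma card_pow_five_perm_five : #{b : S₅ | b ^ 5 = 1 ∧ b ≠ 1} = 24 := by decide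

lemma card_pow_six_perm_five : #{b : S₅ | b ^ 6 = 1 ∧ b ^ 2 ≠ 1} = 40 := by decide

/-- The three classes are the elements of order 4, of order 5, and of order 3 or 6. -/
lemma sum_sq_ne_one_perm_five (F : S₅ → ℤ) :
    ∑ b with b ^ 2 ≠ 1, F b = ∑ b with b ^ 4 = 1 ∧ b ^ 2 ≠ 1, F b +
      ∑ b with b ^ 5 = 1 ∧ b ≠ 1, F b + ∑ b with b ^ 6 = 1 ∧ b ^ 2 ≠ 1, F b := by
  have hclass : ∀ b : S₅, (if b ^ 2 ≠ 1 then 1 else 0 : ℤ) =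
      (if b ^ 4 = 1 ∧ b ^ 2 ≠ 1 then 1 else 0) + (if b ^ 5 = 1 ∧ b ≠ 1 then 1 else 0) +
        (if b ^ 6 = 1 ∧ b ^ 2 ≠ 1 then 1 else 0) := by decide
  simp only [sum_filter, ← sum_add_distrib]
  refine sum_congr rfl fun b _ => ?_
  have := hclass b
  split_ifs at this ⊢ <;> linarith

/-- The 15 double transpositions, each the square of exactly two 4-cycles. -/
def squaresOfOrderFour : Finset S₅ :=
  ({b : S₅ | b ^ 4 = 1 ∧ b ^ 2 ≠ 1} : Finset S₅).image (· ^ 2)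

lemma sum_sq_pow_four_perm_five (F : S₅ → ℤ) :
    ∑ b with b ^ 4 = 1 ∧ b ^ 2 ≠ 1, F (b ^ 2) = 2 * ∑ d ∈ squaresOfOrderFour, F d := by
  have hfiber : ∀ d ∈ squaresOfOrderFour,
      #{b ∈ ({b : S₅ | b ^ 4 = 1 ∧ b ^ 2 ≠ 1} : Finset S₅) | b ^ 2 = d} = 2 := by decide
  rw [sum_comp, mul_sum]
  exact sum_congr rfl fun d hd => by rw [hfiber d hd, two_nsmul, two_mul]

lemma squaresOfOrderFour_subset : squaresOfOrderFour ⊆ ({b : S₅ | b ^ 2 = 1} : Finset S₅) := by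
  intro d hd
  obtain ⟨b, hb, rfl⟩ := mem_image.1 hd
  simp only [mem_filter, mem_univ, true_and] at hb ⊢
  rw [← pow_mul, hb.1]

lemma card_sq_eq_one_sdiff_squaresOfOrderFour :
    #(({b : S₅ | b ^ 2 = 1} : Finset S₅) \ squaresOfOrderFour) = 11 := by
  decide

variable {χ : S₅ → ℤ} (hχ : ∀ g, χ g = 1 ∨ χ g = -1)
include hχ

lemma sum_autocorr_sq_eq_one_le :
    ∑ b with b ^ 2 = 1, autocorr χ b ≤ ∑ d ∈ squaresOfOrderFour, autocorr χ d + 1320 := by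
  rw [← sum_sdiff squaresOfOrderFour_subset]
  have hle : ∀ b ∈ ({b : S₅ | b ^ 2 = 1} : Finset S₅) \ squaresOfOrderFour, autocorr χ b ≤ 120 :=
    fun b _ => by simpa [card_perm_fin_five] using (abs_le.1 (abs_autocorr_le hχ b)).2
  have := sum_le_card_nsmul _ _ _ hle
  rw [card_sq_eq_one_sdiff_squaresOfOrderFour] at this
  simp only [Int.nsmul_eq_mul, Nat.cast_ofNat] at this
  linarith

lemma neg_le_sum_two_mul_autocorr_add_autocorr_sq :
    -5760 ≤ ∑ b : S₅ with b ^ 2 ≠ 1, (2 * autocorr χ b + autocorr χ (b ^ 2)) := by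
  have htotal := sum_autocorr_nonneg χ
  rw [← sum_filter_add_sum_filter_not univ (fun b : S₅ => b ^ 2 = 1)] at htotal
  have hinv := sum_autocorr_sq_eq_one_le hχ
  have h₅ := neg_card_mul_card_le_four_mul_sum_autocorr_sq_of_pow_five hχ
  have h₆ := neg_card_mul_card_le_two_mul_sum_autocorr_sq_of_pow_six hχ
  rw [card_perm_fin_five, card_pow_five_perm_five] at h₅
  rw [card_perm_fin_five, card_pow_six_perm_five] at h₆
  rw [sum_add_distrib, ← mul_sum, sum_sq_ne_one_perm_five fun b => autocorr χ (b ^ 2),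
    sum_sq_pow_four_perm_five]
  simp only [ne_eq] at htotal ⊢
  push_cast at h₅ h₆
  linarith

lemma le_sum_card_monoStarts : 1380 ≤ ∑ b : S₅ with b ^ 2 ≠ 1, #(monoStarts χ b) := by
  have h := neg_le_sum_two_mul_autocorr_add_autocorr_sq hχ
  have h4 : ∑ b : S₅ with b ^ 2 ≠ 1, (4 * #(monoStarts χ b) : ℤ) =
      ∑ b : S₅ with b ^ 2 ≠ 1, (120 + (2 * autocorr χ b + autocorr χ (b ^ 2))) :=
    sum_congr rfl fun b _ => by rw [four_mul_card_monoStarts hχ, card_perm_fin_five]; ring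
  rw [← mul_sum, sum_add_distrib, sum_const, card_sq_ne_one_perm_five, nsmul_eq_mul] at h4
  push_cast at h4
  have : (1380 : ℤ) ≤ ∑ b : S₅ with b ^ 2 ≠ 1, (#(monoStarts χ b) : ℤ) := by linarith
  exact_mod_cast this

lemma le_monoAPCount_perm_five : 230 ≤ monoAPCount S₅ χ := by
  have := sum_card_monoStarts_le χ
  have := le_sum_card_monoStarts hχ
  omega

end SymmetricGroupFive

theorem RThree_symm_5_lower_bound :
    (∀ χ : Equiv.Perm (Fin 5) → ℤ, (∀ g, χ g = 1 ∨ χ g = -1) →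
      90 ≤ monoAPCount (Equiv.Perm (Fin 5)) χ) ∧
    90 ≤ RThree (Equiv.Perm (Fin 5)) := by
  have h : ∀ χ : Equiv.Perm (Fin 5) → ℤ, (∀ g, χ g = 1 ∨ χ g = -1) →
      90 ≤ monoAPCount (Equiv.Perm (Fin 5)) χ :=
    fun _ hχ => le_trans (by norm_num) (le_monoAPCount_perm_five hχ)
  exact ⟨h, le_RThree h⟩
end
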